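/- arXiv:1707.06129 — 4 statements merged into one kernel-verified Lean document; each statement's English description precedes it below -/
import Mathlib

section
/- Assume Hypotheses 1–3. Then there exists a function V : 𝕏 × ℝ → [0,∞), not identically zero, such that: (1) (harmonicity) for every (x,y) ∈ 𝕏 × ℝ and every n ≥ 1, 𝔼_x( V(X_n, y+S_n) ; τ_y > n ) = V(x,y); (2) for every x ∈ 𝕏 the function y ↦ V(x,y) is non-decreasing, and there exists c > 0 such that V(x,y) ≤ c(1 + max(y,0)) for all (x,y); (3) for every δ ∈ (0,1) there exists c_δ > 0 such that (1−δ)·max(y,0) − c_δ ≤ V(x,y) ≤ (1+δ)·max(y,0) + c_δ for all (x,y) ∈ 𝕏 × ℝ. -/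
/-!
Solve the Poisson equation `h = P (f + h)`: primitivity leaves only constant `P`-harmonic
functions, so `range (I - P) = ker ν`, which contains `f`. Then `y + Sₙ + h(Xₙ)` is a martingale.
Normalised to `h ≤ 0`, its version killed at `τ_y` is a submartingale, dominated by the
supermartingale `max (y + Sₙ) 0 + h(Xₙ) + 2b`, where `-b ≤ f, h`. Hence
`V(x, y) = lim 𝔼_x[y + Sₙ + h(Xₙ); τ_y > n]` exists, is harmonic for the killed chain, and
`max y 0 - b ≤ V ≤ max y 0 + 2b`.

Positivity and monotonicity of `V` in `y` follow by comparing with `𝔼_x[(y + Sₙ)⁺; τ_y > n]`, once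
`τ_y < ∞` almost surely. For this, centring and the non-lattice condition force a cycle with
negative `f`-sum (otherwise `f` would be a gradient along the edges and every cycle sum would
vanish), so from every state the walk can drop below any level in a fixed number of steps with
probability bounded below; an optional-stopping bound controls escapes above a high barrier.
-/

open Finset Filter Real Topology MeasureTheory

namespace CLLT

variable {X : Type*}

/-- Product of the transition weights along a path. -/
noncomputable def wt (P : X → X → ℝ) : X → List X → ℝ
  | _, [] => 1
  | x, y :: ys => P x y * wt P y ys

/-- Extension of a finite path `X₁, …, Xₙ` to a trajectory `ℕ → X` with `X₀ = x`
(values beyond time `n` are irrelevant and set to `x`). -/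
def pathExt (x : X) {n : ℕ} (path : Fin n → X) : ℕ → X := fun k =>
  if h : 1 ≤ k ∧ k ≤ n then path ⟨k - 1, by omega⟩ else x

/-- Expectation `𝔼_x (F (X₀, X₁, …))` of a functional of the first `n` steps of the
Markov chain with transition kernel `P` started at `X₀ = x`. -/
noncomputable def Ex [Fintype X] (P : X → X → ℝ) (x : X) (n : ℕ)
    (F : (ℕ → X) → ℝ) : ℝ :=
  ∑ path : Fin n → X, wt P x (List.ofFn path) * F (pathExt x path)

open Classical in
/-- Real-valued indicator of a proposition. -/
noncomputable def ind (p : Prop) : ℝ := if p then 1 else 0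

/-- Partial sum `S_k = f(X₁) + ⋯ + f(X_k)` along a trajectory. -/
noncomputable def Spath (f : X → ℝ) (ω : ℕ → X) (k : ℕ) : ℝ :=
  ∑ i ∈ Finset.Icc 1 k, f (ω i)

/-- The event `τ_y > n`, i.e. `y + S_k > 0` for all `k = 1, …, n`. -/
def survives (f : X → ℝ) (y : ℝ) (n : ℕ) (ω : ℕ → X) : Prop :=
  ∀ k ∈ Finset.Icc 1 n, 0 < y + Spath f ω k

/-- `n`-step transition kernel. -/
noncomputable def kpow [Fintype X] [DecidableEq X] (P : X → X → ℝ) : ℕ → X → X → ℝ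
  | 0 => fun x x' => if x = x' then 1 else 0
  | n + 1 => fun x x' => ∑ y, P x y * kpow P n y x'

/-- Transition operator acting on functions. -/
noncomputable def Pop [Fintype X] (P : X → X → ℝ) (g : X → ℝ) (x : X) : ℝ :=
  ∑ x', P x x' * g x'

/-- Asymptotic variance `σ² = ν(f²) + 2 ∑_{n ≥ 1} ν(f ⬝ Pⁿ f)`. -/
noncomputable def sigma2 [Fintype X] (P : X → X → ℝ) (ν f : X → ℝ) : ℝ :=
  (∑ x, f x ^ 2 * ν x) + 2 * ∑' n : ℕ, ∑ x, f x * ((Pop P)^[n + 1] f) x * ν x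

/-- Hypothesis 1 (primitivity). -/
def Primitive [Fintype X] [DecidableEq X] (P : X → X → ℝ) : Prop :=
  ∃ k₀ : ℕ, 1 ≤ k₀ ∧ ∀ x x', 0 < kpow P k₀ x x'

/-- Hypothesis 3 (non-lattice condition). -/
def NonLattice [Fintype X] (P : X → X → ℝ) (f : X → ℝ) : Prop :=
  ∀ θ a : ℝ, ∃ (n : ℕ) (g : Fin (n + 1) → X),
    (0 < ∏ i : Fin (n + 1), P (g i) (g (i + 1))) ∧
    ∀ m : ℤ, (∑ i, f (g i)) - (n + 1 : ℝ) * θ ≠ a * (m : ℝ)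

/-- `P` is a stochastic matrix and `ν` is a positive invariant probability for it. -/
structure IsStochastic [Fintype X] (P : X → X → ℝ) (ν : X → ℝ) : Prop where
  nonneg : ∀ x x', 0 ≤ P x x'
  rowSum : ∀ x, ∑ x', P x x' = 1
  nuPos : ∀ x, 0 < ν x
  nuSum : ∑ x, ν x = 1
  nuInv : ∀ x', ∑ x, ν x * P x x' = ν x'

/-- Dual kernel `P*(x, x') = ν(x') P(x', x) / ν(x)`. -/
noncomputable def dualK (P : X → X → ℝ) (ν : X → ℝ) (x x' : X) : ℝ :=
  ν x' * P x' x / ν x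

/-- Sup norm of a function on a finite set. -/
noncomputable def supN [Fintype X] [Nonempty X] (ψ : X → ℝ) : ℝ := ⨆ x, |ψ x|

/-- Rayleigh density `φ₊(t) = t e^{-t²/2} 𝟙_{t ≥ 0}`. -/
noncomputable def rayleigh (t : ℝ) : ℝ := if 0 ≤ t then t * Real.exp (-t ^ 2 / 2) else 0

/-- Centred normal density with standard deviation `s`. -/
noncomputable def gauss (s u : ℝ) : ℝ :=
  Real.exp (-u ^ 2 / (2 * s ^ 2)) / (s * Real.sqrt (2 * π))

/-- Perturbed transition operator `P_t`, as a complex matrix. -/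
noncomputable def Pmat [Fintype X] (P : X → X → ℝ) (f : X → ℝ) (t : ℝ) : Matrix X X ℂ :=
  Matrix.of fun x x' => (P x x' : ℂ) * Complex.exp (Complex.I * (t : ℂ) * (f x' : ℂ))

/-- A complex matrix viewed as a continuous linear operator on `X → ℂ`
(equipped with the sup norm). -/
noncomputable def toCLM [Fintype X] (M : Matrix X X ℂ) : (X → ℂ) →L[ℂ] (X → ℂ) :=
  LinearMap.toContinuousLinearMap M.mulVecLin

/-- Fourier transform `ĥ(t) = ∫ e^{-i t u} h(u) du`. -/
noncomputable def FT (h : ℝ → ℝ) (t : ℝ) : ℂ :=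
  ∫ u : ℝ, Complex.exp (-(Complex.I * (t : ℂ) * (u : ℂ))) * (h u : ℂ)

/-- Convolution `(g ∗ k)(u) = ∫ g(v) k(u - v) dv`. -/
noncomputable def convR (g k : ℝ → ℝ) (u : ℝ) : ℝ := ∫ v : ℝ, g v * k (u - v)

/-- Stone's kernel `κ`. -/
noncomputable def kapp (u : ℝ) : ℝ :=
  if u = 0 then 1 / (2 * π) else (Real.sin (u / 2) / (u / 2)) ^ 2 / (2 * π)

/-- Scaled kernel `κ_δ(u) = κ(u/δ)/δ`. -/
noncomputable def kappD (δ u : ℝ) : ℝ := kapp (u / δ) / δ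

/-- Upper regularisation `h̄_ε(u) = sup_{v ∈ [u-ε, u+ε]} h(v)`. -/
noncomputable def upReg (h : ℝ → ℝ) (ε u : ℝ) : ℝ := sSup (h '' Set.Icc (u - ε) (u + ε))

/-- Lower regularisation `ẖ_ε(u) = inf_{v ∈ [u-ε, u+ε]} h(v)`. -/
noncomputable def loReg (h : ℝ → ℝ) (ε u : ℝ) : ℝ := sInf (h '' Set.Icc (u - ε) (u + ε))

/-- The class `𝓗_ε`: non-negative, locally bounded, with `h`, `h̄_ε`, `ẖ_ε`
measurable and Lebesgue integrable. -/
def MemH (ε : ℝ) (h : ℝ → ℝ) : Prop :=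
  (∀ u, 0 ≤ h u) ∧ (∀ K : Set ℝ, IsCompact K → BddAbove (h '' K)) ∧
  Measurable h ∧ Measurable (upReg h ε) ∧ Measurable (loReg h ε) ∧
  Integrable h ∧ Integrable (upReg h ε) ∧ Integrable (loReg h ε)


lemma ind_of {p : Prop} (h : p) : ind p = 1 := by simp [ind, h]

lemma ind_of_not {p : Prop} (h : ¬p) : ind p = 0 := by simp [ind, h]

lemma ind_and (p q : Prop) : ind (p ∧ q) = ind p * ind q := by
  by_cases hp : p <;> by_cases hq : q <;> simp [ind, hp, hq]

section KilledOperator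

variable [Fintype X] {P : X → X → ℝ} {f : X → ℝ} {S T : Set ℝ}

variable (P f) in
/-- One step of the walk `(Xₙ, y + Sₙ)`, killed when the position leaves `S`:
`Q_S φ (x, y) = 𝔼_x [φ (X₁, y + f X₁); y + f X₁ ∈ S]`. -/
noncomputable def killedOp (S : Set ℝ) : Module.End ℝ (X → ℝ → ℝ) where
  toFun φ x y := ∑ x', P x x' * (ind (y + f x' ∈ S) * φ x' (y + f x'))
  map_add' φ ψ := by
    ext x y
    simp only [Pi.add_apply, mul_add, Finset.sum_add_distrib]
  map_smul' c φ := by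
    ext x y
    simp only [Pi.smul_apply, smul_eq_mul, RingHom.id_apply, Finset.mul_sum]
    exact Finset.sum_congr rfl fun _ _ => by ring

lemma killedOp_apply (S : Set ℝ) (φ : X → ℝ → ℝ) (x : X) (y : ℝ) :
    killedOp P f S φ x y = ∑ x', P x x' * (ind (y + f x' ∈ S) * φ x' (y + f x')) := rfl

lemma killedOp_le_of_le_on (hP : ∀ x x', 0 ≤ P x x') {φ ψ : X → ℝ → ℝ}
    (h : ∀ x t, t ∈ S → φ x t ≤ ψ x t) : killedOp P f S φ ≤ killedOp P f S ψ := by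
  intro x y
  refine Finset.sum_le_sum fun x' _ => mul_le_mul_of_nonneg_left ?_ (hP x x')
  by_cases hs : y + f x' ∈ S
  · simpa [ind_of hs] using h x' _ hs
  · simp [ind_of_not hs]

lemma killedOp_mono (hP : ∀ x x', 0 ≤ P x x') : Monotone (killedOp P f S) :=
  fun _ _ h => killedOp_le_of_le_on hP fun x t _ => h x t

lemma killedOp_pow_mono (hP : ∀ x x', 0 ≤ P x x') (n : ℕ) :
    Monotone (killedOp P f S ^ n) := by
  induction n with
  | zero => exact monotone_id
  | succ n ih =>
    rw [pow_succ']
    exact (killedOp_mono hP).comp ih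

lemma killedOp_pow_le_of_le_on (hP : ∀ x x', 0 ≤ P x x') {n : ℕ} (hn : n ≠ 0)
    {φ ψ : X → ℝ → ℝ} (h : ∀ x t, t ∈ S → φ x t ≤ ψ x t) :
    (killedOp P f S ^ n) φ ≤ (killedOp P f S ^ n) ψ := by
  obtain ⟨m, rfl⟩ := Nat.exists_eq_succ_of_ne_zero hn
  rw [pow_succ]
  exact killedOp_pow_mono hP m (killedOp_le_of_le_on hP h)

lemma killedOp_pow_nonneg (hP : ∀ x x', 0 ≤ P x x') (n : ℕ) {φ : X → ℝ → ℝ} (h : 0 ≤ φ) :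
    0 ≤ (killedOp P f S ^ n) φ := by
  simpa using killedOp_pow_mono hP n h

lemma killedOp_one_le_one (hP : ∀ x x', 0 ≤ P x x') (hrow : ∀ x, ∑ x', P x x' = 1) :
    killedOp P f S 1 ≤ 1 := by
  intro x y
  calc killedOp P f S 1 x y ≤ ∑ x', P x x' := by
        refine Finset.sum_le_sum fun x' _ => mul_le_of_le_one_right (hP x x') ?_
        by_cases hs : y + f x' ∈ S <;> simp [ind_of, ind_of_not, hs]
    _ = 1 := hrow x

lemma antitone_killedOp_pow (hP : ∀ x x', 0 ≤ P x x') {ψ : X → ℝ → ℝ}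
    (hψ : killedOp P f S ψ ≤ ψ) : Antitone fun n => (killedOp P f S ^ n) ψ :=
  antitone_nat_of_succ_le fun n => by
    rw [pow_succ, Module.End.mul_apply]
    exact killedOp_pow_mono hP n hψ

lemma monotone_killedOp_pow (hP : ∀ x x', 0 ≤ P x x') {φ : X → ℝ → ℝ}
    (hφ : φ ≤ killedOp P f S φ) : Monotone fun n => (killedOp P f S ^ n) φ :=
  monotone_nat_of_le_succ fun n => by
    rw [pow_succ, Module.End.mul_apply]
    exact killedOp_pow_mono hP n hφ

lemma killedOp_pow_le_self (hP : ∀ x x', 0 ≤ P x x') {ψ : X → ℝ → ℝ}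
    (hψ : killedOp P f S ψ ≤ ψ) (n : ℕ) : (killedOp P f S ^ n) ψ ≤ ψ := by
  simpa using antitone_killedOp_pow hP hψ (Nat.zero_le n)

lemma killedOp_pow_one_le_one (hP : ∀ x x', 0 ≤ P x x') (hrow : ∀ x, ∑ x', P x x' = 1)
    (n : ℕ) : (killedOp P f S ^ n) 1 ≤ 1 :=
  killedOp_pow_le_self hP (killedOp_one_le_one hP hrow) n

lemma killedOp_diff_add (hST : S ⊆ T) :
    killedOp P f (T \ S) + killedOp P f S = killedOp P f T := by
  ext φ x y
  simp only [LinearMap.add_apply, Pi.add_apply, killedOp_apply, ← Finset.sum_add_distrib]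
  refine Finset.sum_congr rfl fun x' _ => ?_
  by_cases hs : y + f x' ∈ S
  · simp [ind_of, ind_of_not, hs, hST hs]
  · by_cases ht : y + f x' ∈ T <;> simp [ind_of, ind_of_not, hs, ht]

lemma tendsto_killedOp {φ : ℕ → X → ℝ → ℝ} {ψ : X → ℝ → ℝ}
    (h : ∀ x t, t ∈ S → Tendsto (fun n => φ n x t) atTop (𝓝 (ψ x t))) (x : X) (y : ℝ) :
    Tendsto (fun n => killedOp P f S (φ n) x y) atTop (𝓝 (killedOp P f S ψ x y)) := by
  refine tendsto_finsetSum _ fun x' _ => (tendsto_const_nhds.mul ?_)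
  by_cases hs : y + f x' ∈ S
  · simpa [ind_of hs] using h x' _ hs
  · simp [ind_of_not hs]

lemma monotone_killedOp_apply (hP : ∀ x x', 0 ≤ P x x') (hS : IsUpperSet S)
    {φ : X → ℝ → ℝ} (h0 : 0 ≤ φ) (hφ : ∀ x, Monotone (φ x)) (x : X) :
    Monotone (killedOp P f S φ x) := by
  intro y y' hy
  refine Finset.sum_le_sum fun x' _ => mul_le_mul_of_nonneg_left ?_ (hP x x')
  have hy' : y + f x' ≤ y' + f x' := by linarith
  by_cases hs : y + f x' ∈ S
  · simpa [ind_of hs, ind_of (hS hy' hs)] using hφ x' hy'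
  · rw [ind_of_not hs, zero_mul]
    by_cases hs' : y' + f x' ∈ S
    · simpa [ind_of hs'] using h0 x' (y' + f x')
    · simp [ind_of_not hs']

lemma monotone_killedOp_pow_apply (hP : ∀ x x', 0 ≤ P x x') (hS : IsUpperSet S)
    {φ : X → ℝ → ℝ} (h0 : 0 ≤ φ) (hφ : ∀ x, Monotone (φ x)) (n : ℕ) (x : X) :
    Monotone ((killedOp P f S ^ n) φ x) := by
  induction n generalizing x with
  | zero => exact hφ x
  | succ n ih =>
    rw [pow_succ', Module.End.mul_apply]
    exact monotone_killedOp_apply hP hS (killedOp_pow_nonneg hP n h0) ih x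

end KilledOperator

section PathSpace

variable {f : X → ℝ}

lemma pathExt_zero (x : X) {n : ℕ} (path : Fin n → X) : pathExt x path 0 = x := by
  simp [pathExt]

lemma pathExt_cons_succ (x x₁ : X) {n : ℕ} (rest : Fin n → X) {k : ℕ} (hk : k ≤ n) :
    pathExt x (Fin.cons x₁ rest : Fin (n + 1) → X) (k + 1) = pathExt x₁ rest k := by
  rcases k with _ | k
  · simp [pathExt]
  · simp only [pathExt, dif_pos (And.intro (Nat.le_add_left 1 _) (Nat.succ_le_succ hk)),
      dif_pos (And.intro (Nat.le_add_left 1 k) hk)]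
    exact Fin.cons_succ (α := fun _ => X) x₁ rest ⟨k, by omega⟩

lemma Spath_succ (ω : ℕ → X) (n : ℕ) :
    Spath f ω (n + 1) = f (ω 1) + Spath f (fun k => ω (k + 1)) n := by
  induction n with
  | zero => simp [Spath]
  | succ n ih =>
    rw [Spath, Finset.sum_Icc_succ_top (by omega), ← Spath, ih, Spath, Spath,
      Finset.sum_Icc_succ_top (by omega), add_assoc]

lemma Spath_congr {ω ω' : ℕ → X} {n : ℕ} (h : ∀ k ≤ n, ω k = ω' k) :
    Spath f ω n = Spath f ω' n :=
  Finset.sum_congr rfl fun k hk => by rw [h k (Finset.mem_Icc.1 hk).2]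

lemma survives_congr {ω ω' : ℕ → X} {y : ℝ} {n : ℕ} (h : ∀ k ≤ n, ω k = ω' k) :
    survives f y n ω ↔ survives f y n ω' :=
  forall₂_congr fun k hk => by
    rw [Spath_congr fun j hj => h j (hj.trans (Finset.mem_Icc.1 hk).2)]

lemma survives_succ {ω : ℕ → X} {y : ℝ} {n : ℕ} :
    survives f y (n + 1) ω ↔
      0 < y + f (ω 1) ∧ survives f (y + f (ω 1)) n fun k => ω (k + 1) := by
  have hS : ∀ k, y + Spath f ω (k + 1) = y + f (ω 1) + Spath f (fun k => ω (k + 1)) k :=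
    fun k => by rw [Spath_succ, add_assoc]
  constructor
  · intro h
    refine ⟨by simpa [hS, Spath] using h 1 (by simp), fun k hk => ?_⟩
    rw [← hS]
    exact h (k + 1) (by simp only [Finset.mem_Icc] at hk ⊢; omega)
  · rintro ⟨h1, h⟩ (_ | k) hk
    · simp at hk
    · rw [hS]
      rcases k.eq_zero_or_pos with rfl | hk'
      · simpa [Spath] using h1
      · exact h k (by simp only [Finset.mem_Icc] at hk ⊢; omega)

lemma Ex_eq_killedOp_pow [Fintype X] (P : X → X → ℝ) (φ : X → ℝ → ℝ) (n : ℕ) (x : X)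
    (y : ℝ) : Ex P x n (fun ω => φ (ω n) (y + Spath f ω n) * ind (survives f y n ω))
      = (killedOp P f (Set.Ioi 0) ^ n) φ x y := by
  induction n generalizing x y with
  | zero => simp [Ex, wt, pathExt_zero, Spath, survives, ind]
  | succ n ih =>
    rw [pow_succ', Module.End.mul_apply, killedOp_apply]
    simp_rw [← ih]
    rw [Ex, ← (Fin.consEquiv fun _ => X).sum_comp, Fintype.sum_prod_type]
    refine Finset.sum_congr rfl fun x₁ _ => ?_
    rw [Ex, Finset.mul_sum, Finset.mul_sum]
    refine Finset.sum_congr rfl fun rest _ => ?_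
    set ω := pathExt x (Fin.cons x₁ rest : Fin (n + 1) → X)
    have hshift : ∀ k ≤ n, ω (k + 1) = pathExt x₁ rest k := fun k hk =>
      pathExt_cons_succ x x₁ rest hk
    have hω1 : ω 1 = x₁ := (hshift 0 (Nat.zero_le n)).trans (pathExt_zero _ _)
    have hwt : wt P x (List.ofFn (Fin.cons x₁ rest : Fin (n + 1) → X))
        = P x x₁ * wt P x₁ (List.ofFn rest) := by
      simp [List.ofFn_succ, wt]
    change wt P x (List.ofFn (Fin.cons x₁ rest : Fin (n + 1) → X)) * (φ (ω (n + 1))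
      (y + Spath f ω (n + 1)) * ind (survives f y (n + 1) ω)) = _
    rw [hwt, Spath_succ, survives_succ, hω1, Spath_congr (ω := fun k => ω (k + 1)) hshift,
      survives_congr (ω := fun k => ω (k + 1)) hshift, hshift n le_rfl, ind_and, Set.mem_Ioi,
      ← add_assoc]
    ring

end PathSpace

section Walks

variable {P : X → X → ℝ} {f : X → ℝ}

/-- `HasWalk P f a b n s`: some `n`-step path of positive probability leads from `a` to `b`,
and `s` is the sum of `f` over the states it enters. -/
inductive HasWalk (P : X → X → ℝ) (f : X → ℝ) : X → X → ℕ → ℝ → Prop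
  | nil (a : X) : HasWalk P f a a 0 0
  | cons {a b c : X} {n : ℕ} {s : ℝ} :
      0 < P a b → HasWalk P f b c n s → HasWalk P f a c (n + 1) (f b + s)

namespace HasWalk

lemma append {a b c : X} {n m : ℕ} {s t : ℝ} (hab : HasWalk P f a b n s)
    (hbc : HasWalk P f b c m t) : HasWalk P f a c (n + m) (s + t) := by
  induction hab with
  | nil => simpa using hbc
  | cons hP _ ih =>
    have h := cons hP (ih hbc)
    rwa [Nat.add_right_comm, ← add_assoc] at h

lemma single {a b : X} (h : 0 < P a b) : HasWalk P f a b 1 (f b) := by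
  simpa using cons h (nil (P := P) (f := f) b)

lemma sum_le {B : ℝ} (hB : ∀ x, f x ≤ B) {a b : X} {n : ℕ} {s : ℝ}
    (hw : HasWalk P f a b n s) : s ≤ n * B := by
  induction hw with
  | nil => simp
  | @cons _ b _ n _ _ _ ih => push_cast; linarith [hB b]

lemma iterate {a : X} {n : ℕ} {s : ℝ} (hw : HasWalk P f a a n s) (m : ℕ) :
    HasWalk P f a a (m * n) (m * s) := by
  induction m with
  | zero => simpa using nil a
  | succ m ih => simpa [add_mul, add_comm] using hw.append ih

end HasWalk

lemma exists_hasWalk_of_kpow_pos [Fintype X] [DecidableEq X] (hP : ∀ x x', 0 ≤ P x x') :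
    ∀ {n : ℕ} {a b : X}, 0 < kpow P n a b → ∃ s, HasWalk P f a b n s
  | 0, a, b, h => by
    obtain rfl : a = b := by by_contra hab; simp [kpow, hab] at h
    exact ⟨0, .nil a⟩
  | n + 1, a, b, h => by
    have h' : ∑ _c : X, (0 : ℝ) < ∑ c, P a c * kpow P n c b := by simpa [kpow] using h
    obtain ⟨c, -, hc⟩ := Finset.exists_lt_of_sum_lt h'
    have hac : 0 < P a c := (hP a c).lt_of_ne fun h0 => by simp [← h0] at hc
    obtain ⟨s, hs⟩ := exists_hasWalk_of_kpow_pos hP (pos_of_mul_pos_right hc hac.le)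
    exact ⟨_, .cons hac hs⟩

lemma Primitive.exists_hasWalk [Fintype X] [DecidableEq X] (h1 : Primitive P)
    (hP : ∀ x x', 0 ≤ P x x') : ∃ k, 1 ≤ k ∧ ∀ a b, ∃ s, HasWalk P f a b k s := by
  obtain ⟨k, hk, hpos⟩ := h1
  exact ⟨k, hk, fun a b => exists_hasWalk_of_kpow_pos hP (hpos a b)⟩

/-- Without negative closed walks, the least `f`-sum of a walk ending at `x` is finite and
is a subpotential for `f` along the edges. -/
lemma exists_subpotential [Fintype X] {k : ℕ} (hk : ∀ a b, ∃ s, HasWalk P f a b k s)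
    (hcl : ∀ a n s, HasWalk P f a a n s → 0 ≤ s) :
    ∃ u : X → ℝ, ∀ x x', 0 < P x x' → u x' ≤ u x + f x' := by
  obtain ⟨B, hB⟩ := (Set.finite_range f).bddAbove
  have hB' : ∀ x, f x ≤ B := fun x => hB ⟨x, rfl⟩
  let W : X → Set ℝ := fun x => {s | ∃ a n, HasWalk P f a x n s}
  have hbdd : ∀ x, BddBelow (W x) := fun x => ⟨-(k * B), by
    rintro s ⟨a, n, hw⟩
    obtain ⟨t, ht⟩ := hk x a
    linarith [hcl a _ _ (hw.append ht), ht.sum_le hB']⟩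
  refine ⟨fun x => sInf (W x), fun x x' hxx' => ?_⟩
  rw [← sub_le_iff_le_add]
  refine le_csInf ⟨0, x, 0, .nil x⟩ fun s ⟨a, n, hw⟩ => ?_
  rw [sub_le_iff_le_add]
  exact csInf_le (hbdd x') ⟨a, n + 1, hw.append (.single hxx')⟩

lemma IsStochastic.sum_nu_mul_kernel_mul [Fintype X] {ν : X → ℝ} (hS : IsStochastic P ν)
    (g : X → ℝ) :
    ∑ x, ∑ x', ν x * P x x' * g x' = ∑ x', g x' * ν x' := by
  rw [Finset.sum_comm]
  exact Finset.sum_congr rfl fun x' _ => by rw [← Finset.sum_mul, hS.nuInv, mul_comm]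

/-- Averaging the edge defects `u x + f x' - u x'` against `ν ⊗ P` gives `ν(f) = 0`, so a
subpotential of a centred `f` is an exact potential. -/
lemma eq_sub_of_subpotential [Fintype X] {ν : X → ℝ} (hS : IsStochastic P ν)
    (h2 : ∑ x, f x * ν x = 0) {u : X → ℝ} (hu : ∀ x x', 0 < P x x' → u x' ≤ u x + f x')
    {x x' : X} (hxx' : 0 < P x x') : f x' = u x' - u x := by
  let D : X × X → ℝ := fun p => ν p.1 * P p.1 p.2 * (u p.1 + f p.2 - u p.2)
  have hD0 : 0 ≤ D := fun p => by
    rcases (hS.nonneg p.1 p.2).eq_or_lt with h | h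
    · simp [D, ← h]
    · exact mul_nonneg (mul_nonneg (hS.nuPos _).le h.le) (by linarith [hu _ _ h])
  have hDsum : ∑ p, D p = 0 := by
    have hrow : ∀ a, ∑ b, ν a * P a b * u a = ν a * u a := fun a => by
      rw [← Finset.sum_mul, ← Finset.mul_sum, hS.rowSum, mul_one]
    simp only [D, Fintype.sum_prod_type, mul_sub, mul_add, Finset.sum_add_distrib,
      Finset.sum_sub_distrib, hrow, hS.sum_nu_mul_kernel_mul]
    rw [← h2]
    simp only [mul_comm (ν _)]
    ring
  have hzero := (Fintype.sum_eq_zero_iff_of_nonneg hD0).1 hDsum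
  have : D (x, x') = 0 := congrFun hzero (x, x')
  have hpos : 0 < ν x * P x x' := mul_pos (hS.nuPos x) hxx'
  simp only [D, mul_eq_zero, hpos.ne', false_or] at this
  linarith

lemma exists_neg_cycle [Fintype X] [DecidableEq X] {ν : X → ℝ}
    (hS : IsStochastic P ν) (h1 : Primitive P) (h2 : ∑ x, f x * ν x = 0)
    (h3 : NonLattice P f) : ∃ z n s, HasWalk P f z z n s ∧ s < 0 := by
  by_contra! hcl
  obtain ⟨k, -, hk⟩ := h1.exists_hasWalk (f := f) hS.nonneg
  obtain ⟨u, hu⟩ := exists_subpotential hk hcl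
  obtain ⟨n, g, hg, hsum⟩ := h3 0 0
  have hedge : ∀ i, 0 < P (g i) (g (i + 1)) := fun i =>
    (hS.nonneg _ _).lt_of_ne (Finset.prod_ne_zero_iff.1 hg.ne' i (Finset.mem_univ i)).symm
  have hshift : ∀ F : X → ℝ, ∑ i, F (g (i + 1)) = ∑ i, F (g i) := fun F =>
    Fintype.sum_equiv (Equiv.addRight 1) _ _ fun _ => rfl
  apply hsum 0
  calc ∑ i, f (g i) - (n + 1 : ℝ) * 0 = ∑ i, (u (g (i + 1)) - u (g i)) := by
        rw [mul_zero, sub_zero, ← hshift f]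
        exact Finset.sum_congr rfl fun i _ => eq_sub_of_subpotential hS h2 hu (hedge i)
    _ = 0 * ((0 : ℤ) : ℝ) := by rw [Finset.sum_sub_distrib, hshift u]; simp

/-- Walk into the negative cycle in `k` steps, then go around it often enough. -/
lemma exists_hasWalk_sum_le_of_neg_cycle [Fintype X] {k : ℕ}
    (hk : ∀ a b, ∃ s, HasWalk P f a b k s) {z : X} {n : ℕ} {s₀ : ℝ}
    (hz : HasWalk P f z z n s₀) (hs₀ : s₀ < 0) (R : ℝ) :
    ∃ N ≥ k, ∀ x, ∃ b s, HasWalk P f x b N s ∧ s ≤ -R := by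
  obtain ⟨B, hB⟩ := (Set.finite_range f).bddAbove
  obtain ⟨m, hm⟩ := exists_nat_ge ((R + k * B) / -s₀)
  rw [div_le_iff₀ (neg_pos.2 hs₀)] at hm
  refine ⟨k + m * n, Nat.le_add_right k _, fun x => ?_⟩
  obtain ⟨t, ht⟩ := hk x z
  refine ⟨z, t + m * s₀, ht.append (hz.iterate m), ?_⟩
  linarith [ht.sum_le fun x => hB ⟨x, rfl⟩]

lemma exists_hasWalk_sum_le_of_nonLattice [Fintype X] [DecidableEq X] {ν : X → ℝ}
    (hS : IsStochastic P ν) (h1 : Primitive P) (h2 : ∑ x, f x * ν x = 0)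
    (h3 : NonLattice P f) (R : ℝ) : ∃ N ≠ 0, ∀ x, ∃ b s, HasWalk P f x b N s ∧ s ≤ -R := by
  obtain ⟨k, hk1, hk⟩ := h1.exists_hasWalk (f := f) hS.nonneg
  obtain ⟨z, n, s₀, hz, hs₀⟩ := exists_neg_cycle hS h1 h2 h3
  obtain ⟨N, hN, hW⟩ := exists_hasWalk_sum_le_of_neg_cycle hk hz hs₀ R
  exact ⟨N, by omega, hW⟩

end Walks

section Corrector

variable [Fintype X] {P : X → X → ℝ} {f h : X → ℝ}

lemma HasWalk.eq_of_harmonic (hP : ∀ x x', 0 ≤ P x x') (hrow : ∀ x, ∑ x', P x x' = 1)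
    {g : X → ℝ} (hg : ∀ x, ∑ x', P x x' * g x' = g x) {M : ℝ} (hM : ∀ x, g x ≤ M)
    {a b : X} {n : ℕ} {s : ℝ} (hw : HasWalk P f a b n s) (ha : g a = M) : g b = M := by
  induction hw with
  | nil => exact ha
  | @cons a c _ _ _ hac _ ih =>
    refine ih ?_
    have hsum : ∑ x', P a x' * (M - g x') = 0 := by
      simp only [mul_sub, Finset.sum_sub_distrib, ← Finset.sum_mul, hrow, hg, ha, one_mul,
        sub_self]
    have hc := (Finset.sum_eq_zero_iff_of_nonneg fun x' _ =>
      mul_nonneg (hP a x') (sub_nonneg.2 (hM x'))).1 hsum c (Finset.mem_univ c)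
    rcases mul_eq_zero.1 hc with h | h
    · exact absurd h hac.ne'
    · linarith

lemma Primitive.eq_const_of_harmonic [DecidableEq X] [Nonempty X] (h1 : Primitive P)
    (hP : ∀ x x', 0 ≤ P x x') (hrow : ∀ x, ∑ x', P x x' = 1) {g : X → ℝ}
    (hg : ∀ x, ∑ x', P x x' * g x' = g x) : ∃ c, ∀ x, g x = c := by
  obtain ⟨x₀, hx₀⟩ := Finite.exists_max g
  obtain ⟨k, -, hk⟩ := h1.exists_hasWalk (f := g) hP
  exact ⟨g x₀, fun x => (hk x₀ x).choose_spec.eq_of_harmonic hP hrow hg hx₀ rfl⟩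

/-- `h = Pθ - max Pθ`, where `θ - Pθ = f` is solvable because `ker (I - P)` is the line of
constants and `range (I - P) ⊆ ker ν`, two spaces of the same dimension. -/
lemma exists_nonpos_poisson_solution [DecidableEq X] [Nonempty X] {ν : X → ℝ}
    (hS : IsStochastic P ν) (h1 : Primitive P) (h2 : ∑ x, f x * ν x = 0) :
    ∃ h : X → ℝ, (∀ x, ∑ x', P x x' * (f x' + h x') = h x) ∧ ∀ x, h x ≤ 0 := by
  let T : (X → ℝ) →ₗ[ℝ] X → ℝ := LinearMap.id - (Matrix.of P).mulVecLin
  let L : Module.Dual ℝ (X → ℝ) := Fintype.linearCombination ℝ ν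
  have hT : ∀ g x, T g x = g x - ∑ x', P x x' * g x' := fun _ _ => rfl
  have hL : ∀ g, L g = ∑ x, g x * ν x := fun g => by
    simp [L, Fintype.linearCombination_apply]
  have hker : LinearMap.ker T = Submodule.span ℝ {1} := by
    refine le_antisymm (fun g hg => ?_) ?_
    · have hg' : ∀ x, ∑ x', P x x' * g x' = g x := fun x => by
        have := congrFun (LinearMap.mem_ker.1 hg) x
        rw [hT] at this
        simp only [Pi.zero_apply] at this
        linarith
      obtain ⟨c, hc⟩ := h1.eq_const_of_harmonic hS.nonneg hS.rowSum hg'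
      exact Submodule.mem_span_singleton.2 ⟨c, funext fun x => by simp [hc x]⟩
    · rw [Submodule.span_le, Set.singleton_subset_iff, SetLike.mem_coe, LinearMap.mem_ker]
      funext x
      simp [hT, hS.rowSum]
  have hrange : LinearMap.range T = LinearMap.ker L := by
    refine Submodule.eq_of_le_of_finrank_le ?_ ?_
    · rintro _ ⟨u, rfl⟩
      rw [LinearMap.mem_ker, hL]
      simp only [hT, sub_mul, Finset.sum_sub_distrib, Finset.sum_mul]
      have e : ∀ x x', P x x' * u x' * ν x = ν x * P x x' * u x' := fun _ _ => by ring
      simp only [e, hS.sum_nu_mul_kernel_mul, sub_self]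
    · have hL0 : L ≠ 0 := fun h0 => by
        have := hL 1
        simp [h0, hS.nuSum] at this
      have := T.finrank_range_add_finrank_ker
      rw [hker, finrank_span_singleton one_ne_zero] at this
      have := Module.Dual.finrank_ker_add_one_of_ne_zero hL0
      omega
  obtain ⟨θ, hθ⟩ : f ∈ LinearMap.range T := hrange ▸ LinearMap.mem_ker.2 ((hL f).trans h2)
  obtain ⟨M, hM⟩ := (Set.finite_range fun x => ∑ x', P x x' * θ x').bddAbove
  refine ⟨fun x => ∑ x', P x x' * θ x' - M, fun x => ?_, fun x => sub_nonpos.2 (hM ⟨x, rfl⟩)⟩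
  have hfθ : ∀ x', f x' + (∑ y, P x' y * θ y - M) = θ x' - M := fun x' => by
    rw [← hθ, hT]; ring
  simp only [hfθ, mul_sub, Finset.sum_sub_distrib, ← Finset.sum_mul, hS.rowSum, one_mul]

lemma sum_mul_add_corrector (hrow : ∀ x, ∑ x', P x x' = 1)
    (hh : ∀ x, ∑ x', P x x' * (f x' + h x') = h x) (x : X) (a : ℝ) :
    ∑ x', P x x' * (a + (f x' + h x')) = a + h x := by
  rw [← hh x]
  simp only [mul_add, Finset.sum_add_distrib, ← Finset.sum_mul, hrow, one_mul]

/-- The killed paths only carry nonpositive values of `y + h x`. -/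
lemma le_killedOp_affine (hP : ∀ x x', 0 ≤ P x x') (hrow : ∀ x, ∑ x', P x x' = 1)
    (hh : ∀ x, ∑ x', P x x' * (f x' + h x') = h x) (hh0 : ∀ x, h x ≤ 0) :
    (fun x y => y + h x) ≤ killedOp P f (Set.Ioi 0) fun x y => y + h x := by
  intro x y
  change y + h x ≤ _
  rw [← sum_mul_add_corrector hrow hh x y]
  refine Finset.sum_le_sum fun x' _ => mul_le_mul_of_nonneg_left ?_ (hP x x')
  by_cases hs : y + f x' ∈ Set.Ioi 0
  · rw [ind_of hs]; linarith
  · rw [ind_of_not hs]; linarith [hh0 x', not_lt.1 (Set.mem_Ioi.not.1 hs)]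

lemma killedOp_majorant_le (hP : ∀ x x', 0 ≤ P x x') (hrow : ∀ x, ∑ x', P x x' = 1)
    (hh : ∀ x, ∑ x', P x x' * (f x' + h x') = h x) {c : ℝ} (hc : ∀ x, 0 ≤ f x + h x + c) :
    killedOp P f (Set.Ioi 0) (fun x y => max y 0 + h x + c) ≤ fun x y => max y 0 + h x + c := by
  intro x y
  calc killedOp P f (Set.Ioi 0) (fun x y => max y 0 + h x + c) x y
      ≤ ∑ x', P x x' * (max y 0 + c + (f x' + h x')) := by
        refine Finset.sum_le_sum fun x' _ => mul_le_mul_of_nonneg_left ?_ (hP x x')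
        dsimp only
        by_cases hs : y + f x' ∈ Set.Ioi 0
        · rw [ind_of hs, one_mul, max_eq_left (Set.mem_Ioi.1 hs).le]
          linarith [le_max_left y 0]
        · rw [ind_of_not hs, zero_mul]
          linarith [le_max_right y 0, hc x']
    _ = max y 0 + h x + c := by rw [sum_mul_add_corrector hrow hh]; ring

structure IsCorrector (P : X → X → ℝ) (f h : X → ℝ) (b : ℝ) : Prop where
  poisson : ∀ x, ∑ x', P x x' * (f x' + h x') = h x
  nonpos : ∀ x, h x ≤ 0
  neg_le_left : ∀ x, -b ≤ f x
  neg_le_right : ∀ x, -b ≤ h x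

lemma IsCorrector.bound_nonneg {b : ℝ} (hc : IsCorrector P f h b) (x : X) : 0 ≤ b := by
  linarith [hc.neg_le_right x, hc.nonpos x]

lemma exists_isCorrector [DecidableEq X] [Nonempty X] {ν : X → ℝ} (hS : IsStochastic P ν)
    (h1 : Primitive P) (h2 : ∑ x, f x * ν x = 0) :
    ∃ h b, IsCorrector P f h b := by
  obtain ⟨h, hh, hh0⟩ := exists_nonpos_poisson_solution hS h1 h2
  obtain ⟨b, hb⟩ := (Set.finite_range fun x => max (-f x) (-h x)).bddAbove
  have hb' : ∀ x, max (-f x) (-h x) ≤ b := fun x => hb ⟨x, rfl⟩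
  exact ⟨h, b, hh, hh0, fun x => by linarith [hb' x, le_max_left (-f x) (-h x)],
    fun x => by linarith [hb' x, le_max_right (-f x) (-h x)]⟩

lemma IsCorrector.killedOp_majorant_le {b : ℝ} (hP : ∀ x x', 0 ≤ P x x')
    (hrow : ∀ x, ∑ x', P x x' = 1) (hc : IsCorrector P f h b) :
    killedOp P f (Set.Ioi 0) (fun x y => max y 0 + h x + 2 * b)
      ≤ fun x y => max y 0 + h x + 2 * b :=
  CLLT.killedOp_majorant_le hP hrow hc.poisson fun x => by
    linarith [hc.neg_le_left x, hc.neg_le_right x]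

end Corrector

section Survival

variable [Fintype X] {P : X → X → ℝ} {f : X → ℝ} {S T : Set ℝ}

lemma HasWalk.exists_killedOp_pow_one_le (hP : ∀ x x', 0 ≤ P x x')
    (hrow : ∀ x, ∑ x', P x x' = 1) {a b : X} {n : ℕ} {s : ℝ} (hw : HasWalk P f a b n s) :
    ∃ β ∈ Set.Ioc (0 : ℝ) 1, ∀ y ∈ S, y + s ∉ S → (killedOp P f S ^ n) 1 a y ≤ 1 - β := by
  classical
  induction hw with
  | nil a => exact ⟨1, ⟨one_pos, le_rfl⟩, fun y hy hy' => absurd (by simpa using hy) hy'⟩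
  | @cons a b c n s hab _ ih =>
    obtain ⟨β, ⟨hβ0, hβ1⟩, hβ⟩ := ih
    have hPab : P a b ≤ 1 :=
      hrow a ▸ Finset.single_le_sum (fun x _ => hP a x) (Finset.mem_univ b)
    refine ⟨P a b * β, ⟨mul_pos hab hβ0, mul_le_one₀ hPab hβ0.le hβ1⟩, fun y hy hys => ?_⟩
    rw [pow_succ', Module.End.mul_apply, killedOp_apply]
    calc ∑ x', P a x' * (ind (y + f x' ∈ S) * (killedOp P f S ^ n) 1 x' (y + f x'))
        ≤ ∑ x', P a x' * (1 - if x' = b then β else 0) := by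
          refine Finset.sum_le_sum fun x' _ => mul_le_mul_of_nonneg_left ?_ (hP a x')
          have hp0 := killedOp_pow_nonneg (S := S) (f := f) hP n zero_le_one x' (y + f x')
          have hp1 := killedOp_pow_one_le_one (S := S) (f := f) hP hrow n x' (y + f x')
          by_cases hS' : y + f x' ∈ S
          · rw [ind_of hS', one_mul]
            split_ifs with hx'
            · subst hx'
              exact hβ _ hS' (by rwa [add_assoc])
            · simpa using hp1
          · rw [ind_of_not hS', zero_mul]
            split_ifs <;> linarith
      _ = 1 - P a b * β := by simp [mul_sub, Finset.sum_sub_distrib, hrow]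

lemma killedOp_pow_mul_one_le (hP : ∀ x x', 0 ≤ P x x') {N : ℕ} (hN : N ≠ 0) {r : ℝ}
    (hr : 0 ≤ r) (h : ∀ x, ∀ y ∈ S, (killedOp P f S ^ N) 1 x y ≤ r) (j : ℕ) :
    ∀ x, ∀ y ∈ S, (killedOp P f S ^ (j * N)) 1 x y ≤ r ^ j := by
  induction j with
  | zero => intro x y _; simp
  | succ j ih =>
    intro x y hy
    have hle := killedOp_pow_le_of_le_on (f := f) hP hN (φ := (killedOp P f S ^ (j * N)) 1)
      (ψ := r ^ j • 1) fun x t ht => by simpa using ih x t ht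
    rw [add_mul, one_mul, add_comm, pow_add, Module.End.mul_apply]
    calc _ ≤ (killedOp P f S ^ N) (r ^ j • 1) x y := hle x y
      _ = r ^ j * (killedOp P f S ^ N) 1 x y := by simp
      _ ≤ r ^ j * r := mul_le_mul_of_nonneg_left (h x y hy) (pow_nonneg hr j)
      _ = r ^ (j + 1) := (pow_succ r j).symm

/-- Optional stopping for the nonnegative supermartingale `ψ`: surviving in `T` while leaving
`S` means visiting the region `T \ S`, where `ψ ≥ R`. -/
lemma smul_killedOp_pow_one_sub_le (hP : ∀ x x', 0 ≤ P x x') (hrow : ∀ x, ∑ x', P x x' = 1)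
    (hST : S ⊆ T) {R : ℝ} (hR : 0 ≤ R) {ψ : X → ℝ → ℝ} (hψ0 : 0 ≤ ψ)
    (hψ : killedOp P f T ψ ≤ ψ) (hψR : ∀ x t, t ∈ T → t ∉ S → R ≤ ψ x t) (n : ℕ) :
    R • ((killedOp P f T ^ n) 1 - (killedOp P f S ^ n) 1) ≤ ψ := by
  suffices key : R • ((killedOp P f T ^ n) 1 - (killedOp P f S ^ n) 1)
      + (killedOp P f S ^ n) ψ ≤ ψ from
    (le_add_of_nonneg_right (killedOp_pow_nonneg hP n hψ0)).trans key
  induction n with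
  | zero => simp
  | succ n ih =>
    have hsplit : ∀ φ, killedOp P f T φ = killedOp P f (T \ S) φ + killedOp P f S φ :=
      fun φ => by rw [← killedOp_diff_add hST]; rfl
    have hid : R • ((killedOp P f T ^ (n + 1)) 1 - (killedOp P f S ^ (n + 1)) 1)
        + (killedOp P f S ^ (n + 1)) ψ
        = killedOp P f (T \ S) (R • (killedOp P f T ^ n) 1) + killedOp P f S
          (R • ((killedOp P f T ^ n) 1 - (killedOp P f S ^ n) 1) + (killedOp P f S ^ n) ψ) := by
      simp only [pow_succ', Module.End.mul_apply, hsplit, map_add, map_sub, map_smul]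
      module
    rw [hid]
    calc _ ≤ killedOp P f (T \ S) ψ + killedOp P f S ψ := by
          refine add_le_add (killedOp_le_of_le_on hP fun x t ht => ?_) (killedOp_mono hP ih)
          calc (R • (killedOp P f T ^ n) 1) x t = R * (killedOp P f T ^ n) 1 x t := rfl
            _ ≤ R * 1 := mul_le_mul_of_nonneg_left
                (killedOp_pow_one_le_one hP hrow n x t) hR
            _ ≤ ψ x t := by simpa using hψR x t ht.1 ht.2
      _ = killedOp P f T ψ := (hsplit ψ).symm
      _ ≤ ψ := hψ

lemma exists_killedOp_pow_Ioo_one_le [Nonempty X] (hP : ∀ x x', 0 ≤ P x x')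
    (hrow : ∀ x, ∑ x', P x x' = 1) {R : ℝ} {N : ℕ}
    (hW : ∀ x, ∃ b s, HasWalk P f x b N s ∧ s ≤ -R) :
    ∃ r < 1, 0 ≤ r ∧ ∀ x, ∀ t ∈ Set.Ioo 0 R, (killedOp P f (Set.Ioo 0 R) ^ N) 1 x t ≤ r := by
  choose b s hw hs using hW
  choose β hβ hβle using fun x => (hw x).exists_killedOp_pow_one_le (S := Set.Ioo 0 R) hP hrow
  obtain ⟨x₀, hx₀⟩ := Finite.exists_min β
  refine ⟨1 - β x₀, by linarith [(hβ x₀).1], by linarith [(hβ x₀).2], fun x t ht => ?_⟩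
  exact (hβle x t ht fun h => by linarith [h.1, ht.2, hs x]).trans (by linarith [hx₀ x])

/-- Given `ε`, put the barrier `R` so high that `ψ(x, y) / R < ε / 2`. Surviving means either
staying in `(0, R)`, which decays geometrically thanks to the descending walks, or crossing `R`,
which the optional-stopping bound controls. -/
lemma tendsto_killedOp_pow_one_of_pos [Nonempty X] (hP : ∀ x x', 0 ≤ P x x')
    (hrow : ∀ x, ∑ x', P x x' = 1) {ψ : X → ℝ → ℝ} (hψ0 : 0 ≤ ψ)
    (hψ : killedOp P f (Set.Ioi 0) ψ ≤ ψ) (hψt : ∀ x t, t ≤ ψ x t)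
    (hdesc : ∀ R, ∃ N ≠ 0, ∀ x, ∃ b s, HasWalk P f x b N s ∧ s ≤ -R) {x : X} {y : ℝ}
    (hy : 0 < y) : Tendsto (fun n => (killedOp P f (Set.Ioi 0) ^ n) 1 x y) atTop (𝓝 0) := by
  refine tendsto_order.2 ⟨fun a ha => Eventually.of_forall fun n =>
    ha.trans_le (killedOp_pow_nonneg hP n zero_le_one x y), fun ε hε => ?_⟩
  set R := 2 * ψ x y / ε + y + 1
  have hψxy : 0 ≤ ψ x y := hψ0 x y
  have hψε : 0 ≤ 2 * ψ x y / ε := by positivity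
  have hyR : y < R := by linarith
  have hR : 0 < R := hy.trans hyR
  have hψR : ψ x y / R < ε / 2 := by
    have hεR : ε / 2 * R = ψ x y + ε / 2 * (y + 1) := by simp only [R]; field_simp; ring
    rw [div_lt_iff₀ hR, hεR]
    linarith [mul_pos (half_pos hε) (by linarith : 0 < y + 1)]
  obtain ⟨N, hN, hW⟩ := hdesc R
  obtain ⟨r, hr1, hr0, hstrip⟩ := exists_killedOp_pow_Ioo_one_le hP hrow hW
  obtain ⟨j, hj⟩ := exists_pow_lt_of_lt_one (half_pos hε) hr1
  have hgeo := killedOp_pow_mul_one_le hP hN hr0 hstrip j x y ⟨hy, hyR⟩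
  have hcross : (killedOp P f (Set.Ioi 0) ^ (j * N)) 1 x y
      - (killedOp P f (Set.Ioo 0 R) ^ (j * N)) 1 x y ≤ ψ x y / R := by
    rw [le_div_iff₀ hR, mul_comm]
    exact smul_killedOp_pow_one_sub_le hP hrow Set.Ioo_subset_Ioi_self hR.le hψ0 hψ
      (fun x t ht ht' => (not_lt.1 fun h => ht' ⟨ht, h⟩).trans (hψt x t)) (j * N) x y
  refine eventually_atTop.2 ⟨j * N, fun n hn => ?_⟩
  calc (killedOp P f (Set.Ioi 0) ^ n) 1 x y
      ≤ (killedOp P f (Set.Ioi 0) ^ (j * N)) 1 x y :=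
        antitone_killedOp_pow hP (killedOp_one_le_one hP hrow) hn x y
    _ < ε := by linarith

lemma tendsto_killedOp_pow_one [Nonempty X] (hP : ∀ x x', 0 ≤ P x x')
    (hrow : ∀ x, ∑ x', P x x' = 1) {ψ : X → ℝ → ℝ} (hψ0 : 0 ≤ ψ)
    (hψ : killedOp P f (Set.Ioi 0) ψ ≤ ψ) (hψt : ∀ x t, t ≤ ψ x t)
    (hdesc : ∀ R, ∃ N ≠ 0, ∀ x, ∃ b s, HasWalk P f x b N s ∧ s ≤ -R) (x : X) (y : ℝ) :
    Tendsto (fun n => (killedOp P f (Set.Ioi 0) ^ n) 1 x y) atTop (𝓝 0) := by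
  have h := tendsto_killedOp (P := P) (f := f) (S := Set.Ioi 0)
    (φ := fun n => (killedOp P f (Set.Ioi 0) ^ n) 1) (ψ := 0)
    (fun x t ht => tendsto_killedOp_pow_one_of_pos (x := x) hP hrow hψ0 hψ hψt hdesc ht) x y
  rw [map_zero, Pi.zero_apply, Pi.zero_apply] at h
  rw [← tendsto_add_atTop_iff_nat 1]
  simpa only [pow_succ', Module.End.mul_apply] using h

lemma IsCorrector.tendsto_killedOp_pow_one [Nonempty X] {h : X → ℝ} {b : ℝ}
    (hP : ∀ x x', 0 ≤ P x x') (hrow : ∀ x, ∑ x', P x x' = 1)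
    (hc : IsCorrector P f h b)
    (hdesc : ∀ R, ∃ N ≠ 0, ∀ x, ∃ b s, HasWalk P f x b N s ∧ s ≤ -R) (x : X) (y : ℝ) :
    Tendsto (fun n => (killedOp P f (Set.Ioi 0) ^ n) 1 x y) atTop (𝓝 0) :=
  CLLT.tendsto_killedOp_pow_one hP hrow
    (fun x t => show 0 ≤ max t 0 + h x + 2 * b by
      linarith [le_max_right t 0, hc.neg_le_right x, hc.bound_nonneg x])
    (hc.killedOp_majorant_le hP hrow)
    (fun x t => by linarith [le_max_left t 0, hc.neg_le_right x, hc.bound_nonneg x])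
    hdesc x y

end Survival

section HarmonicFunction

variable [Fintype X] {P : X → X → ℝ} {f h : X → ℝ} {b : ℝ}

lemma IsCorrector.killedOp_pow_affine_le (hP : ∀ x x', 0 ≤ P x x')
    (hrow : ∀ x, ∑ x', P x x' = 1) (hc : IsCorrector P f h b) (n : ℕ) (x : X) (y : ℝ) :
    (killedOp P f (Set.Ioi 0) ^ n) (fun x y => y + h x) x y ≤ max y 0 + h x + 2 * b := by
  refine (killedOp_pow_mono hP n (fun x y => ?_) x y).trans
    (killedOp_pow_le_self hP (hc.killedOp_majorant_le hP hrow) n x y)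
  linarith [le_max_left y 0, hc.neg_le_right x, hc.nonpos x]

variable (P f h) in
/-- `V(x, y) = lim_n 𝔼_x [y + S_n + h(X_n); τ_y > n]`, a nondecreasing limit. -/
noncomputable def harmonicFun (x : X) (y : ℝ) : ℝ :=
  ⨆ n, (killedOp P f (Set.Ioi 0) ^ n) (fun x y => y + h x) x y

namespace IsCorrector

lemma tendsto_harmonicFun (hP : ∀ x x', 0 ≤ P x x') (hrow : ∀ x, ∑ x', P x x' = 1)
    (hc : IsCorrector P f h b) (x : X) (y : ℝ) :
    Tendsto (fun n => (killedOp P f (Set.Ioi 0) ^ n) (fun x y => y + h x) x y) atTop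
      (𝓝 (harmonicFun P f h x y)) :=
  tendsto_atTop_ciSup
    (fun _ _ hmn => monotone_killedOp_pow hP (le_killedOp_affine hP hrow hc.poisson hc.nonpos)
      hmn x y)
    ⟨_, Set.forall_mem_range.2 fun n => hc.killedOp_pow_affine_le hP hrow n x y⟩

lemma affine_le_harmonicFun (hP : ∀ x x', 0 ≤ P x x') (hrow : ∀ x, ∑ x', P x x' = 1)
    (hc : IsCorrector P f h b) (x : X) (y : ℝ) :
    y + h x ≤ harmonicFun P f h x y := by
  have hmono : Monotone fun n => (killedOp P f (Set.Ioi 0) ^ n) (fun x y => y + h x) x y :=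
    fun _ _ hmn => monotone_killedOp_pow hP (le_killedOp_affine hP hrow hc.poisson hc.nonpos)
      hmn x y
  exact hmono.ge_of_tendsto (hc.tendsto_harmonicFun hP hrow x y) 0

lemma harmonicFun_le (hP : ∀ x x', 0 ≤ P x x') (hrow : ∀ x, ∑ x', P x x' = 1)
    (hc : IsCorrector P f h b) (x : X) (y : ℝ) :
    harmonicFun P f h x y ≤ max y 0 + h x + 2 * b :=
  le_of_tendsto' (hc.tendsto_harmonicFun hP hrow x y) fun n =>
    hc.killedOp_pow_affine_le hP hrow n x y

lemma killedOp_pow_harmonicFun (hP : ∀ x x', 0 ≤ P x x') (hrow : ∀ x, ∑ x', P x x' = 1)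
    (hc : IsCorrector P f h b) (n : ℕ) :
    (killedOp P f (Set.Ioi 0) ^ n) (harmonicFun P f h) = harmonicFun P f h := by
  have hfix : killedOp P f (Set.Ioi 0) (harmonicFun P f h) = harmonicFun P f h := by
    funext x y
    have hlim := (tendsto_add_atTop_iff_nat 1).2 (hc.tendsto_harmonicFun hP hrow x y)
    simp only [pow_succ', Module.End.mul_apply] at hlim
    exact tendsto_nhds_unique
      (tendsto_killedOp (P := P) (f := f) (S := Set.Ioi 0)
        (fun x t _ => hc.tendsto_harmonicFun hP hrow x t) x y) hlim
  induction n with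
  | zero => rfl
  | succ n ih => rw [pow_succ', Module.End.mul_apply, ih, hfix]

lemma tendsto_killedOp_pow_max (hP : ∀ x x', 0 ≤ P x x') (hrow : ∀ x, ∑ x', P x x' = 1)
    (hc : IsCorrector P f h b)
    (hsurv : ∀ x y, Tendsto (fun n => (killedOp P f (Set.Ioi 0) ^ n) 1 x y) atTop (𝓝 0))
    (x : X) (y : ℝ) :
    Tendsto (fun n => (killedOp P f (Set.Ioi 0) ^ n) (fun _ y => max y 0) x y) atTop
      (𝓝 (harmonicFun P f h x y)) := by
  set D : X → ℝ → ℝ := fun x y => max y 0 - (y + h x)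
  have hD0 : 0 ≤ D := fun x y =>
    show 0 ≤ max y 0 - (y + h x) by linarith [le_max_left y 0, hc.nonpos x]
  have hsplit : ∀ n, (killedOp P f (Set.Ioi 0) ^ n) (fun _ y => max y 0)
      = (killedOp P f (Set.Ioi 0) ^ n) (fun x y => y + h x)
        + (killedOp P f (Set.Ioi 0) ^ n) D := fun n => by
    rw [← map_add]
    congr 1
    funext x y
    simp [D]
  have hDlim : Tendsto (fun n => (killedOp P f (Set.Ioi 0) ^ n) D x y) atTop (𝓝 0) := by
    have hbound := (hsurv x y).const_mul b
    rw [mul_zero] at hbound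
    refine squeeze_zero' (Eventually.of_forall fun n => killedOp_pow_nonneg hP n hD0 x y)
      (eventually_atTop.2 ⟨1, fun n hn => ?_⟩) hbound
    have := killedOp_pow_le_of_le_on (f := f) (S := Set.Ioi 0) hP (Nat.one_le_iff_ne_zero.1 hn)
      (φ := D) (ψ := b • 1) (fun x t ht => by
        simp only [D, max_eq_left (Set.mem_Ioi.1 ht).le, Pi.smul_apply, Pi.one_apply,
          smul_eq_mul, mul_one]
        linarith [hc.neg_le_right x]) x y
    simpa using this
  simpa [hsplit] using (hc.tendsto_harmonicFun hP hrow x y).add hDlim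

lemma harmonicFun_nonneg (hP : ∀ x x', 0 ≤ P x x') (hrow : ∀ x, ∑ x', P x x' = 1)
    (hc : IsCorrector P f h b)
    (hsurv : ∀ x y, Tendsto (fun n => (killedOp P f (Set.Ioi 0) ^ n) 1 x y) atTop (𝓝 0))
    (x : X) (y : ℝ) : 0 ≤ harmonicFun P f h x y :=
  ge_of_tendsto' (hc.tendsto_killedOp_pow_max hP hrow hsurv x y) fun n =>
    killedOp_pow_nonneg hP n (fun _ y => le_max_right y 0) x y

lemma monotone_harmonicFun (hP : ∀ x x', 0 ≤ P x x') (hrow : ∀ x, ∑ x', P x x' = 1)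
    (hc : IsCorrector P f h b)
    (hsurv : ∀ x y, Tendsto (fun n => (killedOp P f (Set.Ioi 0) ^ n) 1 x y) atTop (𝓝 0))
    (x : X) : Monotone (harmonicFun P f h x) := fun y y' hyy' =>
  le_of_tendsto_of_tendsto' (hc.tendsto_killedOp_pow_max hP hrow hsurv x y)
    (hc.tendsto_killedOp_pow_max hP hrow hsurv x y') fun n =>
      monotone_killedOp_pow_apply hP (isUpperSet_Ioi 0) (fun _ y => le_max_right y 0)
        (fun _ => monotone_id.max monotone_const) n x hyy'

lemma harmonicFun_mem_Icc (hP : ∀ x x', 0 ≤ P x x') (hrow : ∀ x, ∑ x', P x x' = 1)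
    (hc : IsCorrector P f h b)
    (hsurv : ∀ x y, Tendsto (fun n => (killedOp P f (Set.Ioi 0) ^ n) 1 x y) atTop (𝓝 0))
    (x : X) (y : ℝ) : harmonicFun P f h x y ∈ Set.Icc (max y 0 - b) (max y 0 + 2 * b) := by
  have hlow := hc.affine_le_harmonicFun hP hrow x y
  have hup := hc.harmonicFun_le hP hrow x y
  have h0 := hc.harmonicFun_nonneg hP hrow hsurv x y
  rcases le_total y 0 with hy | hy
  · rw [max_eq_right hy] at hup ⊢
    constructor <;> linarith [hc.bound_nonneg x, hc.nonpos x]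
  · rw [max_eq_left hy] at hup ⊢
    constructor <;> linarith [hc.neg_le_right x, hc.nonpos x]

end IsCorrector

end HarmonicFunction

/-- Proposition 2.1: existence of the harmonic function `V`. -/
theorem exists_harmonic_function [Fintype X] [DecidableEq X] [Nonempty X]
    (P : X → X → ℝ) (ν f : X → ℝ) (hS : IsStochastic P ν)
    (h1 : Primitive P) (h2 : ∑ x, f x * ν x = 0) (h3 : NonLattice P f) :
    ∃ V : X → ℝ → ℝ,
      (∀ x y, 0 ≤ V x y) ∧ (∃ x y, V x y ≠ 0) ∧
      (∀ (x : X) (y : ℝ) (n : ℕ), 1 ≤ n →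
        Ex P x n (fun ω => V (ω n) (y + Spath f ω n) * ind (survives f y n ω)) = V x y) ∧
      (∀ x : X, Monotone (V x)) ∧
      (∃ c > 0, ∀ x y, V x y ≤ c * (1 + max y 0)) ∧
      (∀ δ ∈ Set.Ioo (0 : ℝ) 1, ∃ cδ > 0, ∀ x y,
        (1 - δ) * max y 0 - cδ ≤ V x y ∧ V x y ≤ (1 + δ) * max y 0 + cδ) := by
  obtain ⟨h, b, hc⟩ := exists_isCorrector hS h1 h2
  have hb := hc.bound_nonneg (Classical.arbitrary X)
  have hsurv := hc.tendsto_killedOp_pow_one hS.nonneg hS.rowSum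
    (exists_hasWalk_sum_le_of_nonLattice hS h1 h2 h3)
  have hV := hc.harmonicFun_mem_Icc hS.nonneg hS.rowSum hsurv
  refine ⟨harmonicFun P f h, hc.harmonicFun_nonneg hS.nonneg hS.rowSum hsurv,
    ⟨Classical.arbitrary X, b + 1, ?_⟩, fun x y n _ => ?_,
    hc.monotone_harmonicFun hS.nonneg hS.rowSum hsurv,
    ⟨2 * b + 1, by positivity, fun x y => ?_⟩,
    fun δ hδ => ⟨2 * b + 1, by positivity, fun x y => ⟨?_, ?_⟩⟩⟩
  · have := (hV (Classical.arbitrary X) (b + 1)).1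
    rw [max_eq_left (by linarith)] at this
    linarith
  · rw [Ex_eq_killedOp_pow, hc.killedOp_pow_harmonicFun hS.nonneg hS.rowSum]
  · nlinarith [(hV x y).2, le_max_right y 0]
  · nlinarith [(hV x y).1, le_max_right y 0, hδ.1]
  · nlinarith [(hV x y).2, le_max_right y 0, hδ.1]

end CLLT
end

section
/- (Duality) Assume Hypothesis 1. For every probability measure 𝔪 on 𝕏, every n ≥ 1 and every function F : 𝕏ⁿ → ℝ, 𝔼_𝔪( F(X₁, …, X_{n−1}, X_n) ) = 𝔼*_ν( F(X*_n, X*_{n−1}, …, X*₁) · 𝔪(X*_{n+1})/ν(X*_{n+1}) ), where 𝔼_𝔪 is the expectation for the chain (X_k) with X₀ distributed as 𝔪 and 𝔼*_ν is the expectation for the dual chain (X*_k) with X*₀ distributed as ν. -/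
/-! Along a path `y₀, …, yₙ` the dual weight `ν(y₀) ∏ P*(yᵢ, yᵢ₊₁)` telescopes to
`ν(yₙ) ∏ P(yᵢ₊₁, yᵢ)`, the weight under `P` of the reversed path started from `ν`.
Reversing the dual trajectory `X*₀, …, X*ₙ₊₁`, the factor `𝔪/ν` at its endpoint turns the
initial law `ν` into `𝔪`, and `X*₀` becomes one extra step of the forward chain after time `n`,
which integrates out because `P` is stochastic. -/

open Finset Filter Real Topology MeasureTheory

namespace CLLT

variable {X : Type*}

noncomputable def pathWeight (P : X → X → ℝ) {n : ℕ} (y : Fin (n + 1) → X) : ℝ :=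
  ∏ i : Fin n, P (y i.castSucc) (y i.succ)

lemma wt_ofFn (P : X → X → ℝ) (x : X) {n : ℕ} (p : Fin n → X) :
    wt P x (List.ofFn p) = pathWeight P (Fin.cons x p : Fin (n + 1) → X) := by
  induction n generalizing x with
  | zero => simp [wt, pathWeight]
  | succ n ih =>
    rw [List.ofFn_succ, wt, ih, pathWeight, pathWeight, Fin.prod_univ_succ]
    simp only [Fin.cons_zero, Fin.cons_succ, Fin.castSucc_zero, ← Fin.succ_castSucc]
    rw [← Fin.tail_def, Fin.cons_self_tail]

lemma pathWeight_snoc (P : X → X → ℝ) {n : ℕ} (y : Fin (n + 1) → X) (x : X) :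
    pathWeight P (Fin.snoc y x : Fin (n + 2) → X) = pathWeight P y * P (y (Fin.last n)) x := by
  rw [pathWeight, Fin.prod_univ_castSucc, pathWeight]
  simp only [Fin.succ_castSucc, Fin.snoc_castSucc, Fin.succ_last, Fin.snoc_last]

lemma pathExt_coe (x : X) {n : ℕ} (p : Fin n → X) (k : Fin (n + 1)) :
    pathExt x p k = (Fin.cons x p : Fin (n + 1) → X) k := by
  cases k using Fin.cases with
  | zero => simp [pathExt]
  | succ i => simp [pathExt, Fin.val_succ]

lemma sum_mul_Ex_eq_sum_pathWeight [Fintype X] (P : X → X → ℝ) (μ : X → ℝ) (n : ℕ)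
    (H : (Fin (n + 1) → X) → ℝ) :
    ∑ x, μ x * Ex P x n (fun ω => H fun k => ω k) =
      ∑ y : Fin (n + 1) → X, μ (y 0) * pathWeight P y * H y := by
  simp only [Ex, Finset.mul_sum, wt_ofFn, pathExt_coe]
  rw [← Fintype.sum_prod_type', ← (Fin.consEquiv fun _ => X).sum_comp]
  simp only [mul_assoc]
  rfl

lemma sum_pathWeight_mul_init [Fintype X] {P : X → X → ℝ} (hP : ∀ x, ∑ x', P x x' = 1) {n : ℕ}
    (H : (Fin (n + 1) → X) → ℝ) :
    ∑ w : Fin (n + 2) → X, pathWeight P w * H (Fin.init w) =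
      ∑ y : Fin (n + 1) → X, pathWeight P y * H y := by
  rw [← (Fin.snocEquiv fun _ => X).sum_comp, Fintype.sum_prod_type, Finset.sum_comm]
  refine Finset.sum_congr rfl fun y _ => ?_
  change ∑ x, pathWeight P (Fin.snoc y x : Fin (n + 2) → X) *
    H (Fin.init (Fin.snoc y x : Fin (n + 2) → X)) = _
  simp only [Fin.init_snoc, pathWeight_snoc, mul_right_comm _ (P _ _), ← Finset.mul_sum, hP,
    mul_one]

lemma mul_pathWeight_dualK {P : X → X → ℝ} {ν : X → ℝ} (hν : ∀ x, ν x ≠ 0) {n : ℕ}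
    (y : Fin (n + 1) → X) :
    ν (y 0) * pathWeight (dualK P ν) y = ν (y (Fin.last n)) * pathWeight P (y ∘ Fin.rev) := by
  have hrev : pathWeight P (y ∘ Fin.rev) = ∏ i : Fin n, P (y i.succ) (y i.castSucc) := by
    rw [pathWeight, ← Equiv.prod_comp Fin.revPerm]
    simp [Fin.rev_succ, Fin.rev_castSucc]
  have htel : ν (y 0) * ∏ i : Fin n, ν (y i.succ) =
      (∏ i : Fin n, ν (y i.castSucc)) * ν (y (Fin.last n)) := by
    rw [← Fin.prod_univ_succ (fun i => ν (y i)), Fin.prod_univ_castSucc]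
  have hprod_ne : ∏ i : Fin n, ν (y i.castSucc) ≠ 0 := Finset.prod_ne_zero_iff.2 fun i _ => hν _
  rw [hrev, pathWeight]
  simp only [dualK, Finset.prod_div_distrib, Finset.prod_mul_distrib]
  rw [← mul_div_assoc, ← mul_assoc, htel, mul_assoc, mul_div_cancel_left₀ _ hprod_ne]

theorem duality_formula_general [Fintype X]
    (P : X → X → ℝ) (ν : X → ℝ) (hS : IsStochastic P ν)
    (m : X → ℝ)
    (n : ℕ) (F : (Fin n → X) → ℝ) :
    ∑ x, m x * Ex P x n (fun ω => F (fun i => ω (i.1 + 1))) =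
      ∑ x, ν x * Ex (dualK P ν) x (n + 1)
        (fun ω => F (fun i => ω (n - i.1)) * (m (ω (n + 1)) / ν (ω (n + 1)))) := by
  have hν : ∀ x, ν x ≠ 0 := fun x => (hS.nuPos x).ne'
  calc ∑ x, m x * Ex P x n (fun ω => F (fun i => ω (i.1 + 1)))
      = ∑ y : Fin (n + 1) → X, m (y 0) * pathWeight P y * F (fun i => y i.succ) :=
        sum_mul_Ex_eq_sum_pathWeight P m n fun y => F fun i => y i.succ
    _ = ∑ w : Fin (n + 2) → X, m (w 0) * pathWeight P w * F (fun i => w i.succ.castSucc) := by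
        simpa only [mul_comm (m _), mul_assoc, Fin.init, Fin.castSucc_zero] using
          (sum_pathWeight_mul_init hS.rowSum fun y => m (y 0) * F fun i => y i.succ).symm
    _ = ∑ z : Fin (n + 2) → X, m (z (Fin.last _)) * pathWeight P (z ∘ Fin.rev) *
          F (fun i => z ⟨n - i, by omega⟩) := by
        refine Fintype.sum_equiv (Equiv.arrowCongr Fin.revPerm (Equiv.refl X)) _ _ fun w => ?_
        have hF : (fun i : Fin n => w (Fin.rev ⟨n - i, by omega⟩)) = fun i => w i.succ.castSucc :=
          funext fun i => congrArg w (Fin.ext (by simp; omega))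
        simp [Function.comp_def, hF]
    _ = ∑ z : Fin (n + 2) → X, ν (z 0) * pathWeight (dualK P ν) z *
          (F (fun i => z ⟨n - i, by omega⟩) * (m (z (Fin.last _)) / ν (z (Fin.last _)))) := by
        refine Fintype.sum_congr _ _ fun z => ?_
        rw [mul_pathWeight_dualK hν]
        field_simp [hν]
    _ = _ := (sum_mul_Ex_eq_sum_pathWeight (dualK P ν) ν (n + 1) _).symm

/-- Lemma 3.2, duality. -/
theorem duality_formula [Fintype X] [DecidableEq X] [Nonempty X]
    (P : X → X → ℝ) (ν : X → ℝ) (hS : IsStochastic P ν) (h1 : Primitive P)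
    (m : X → ℝ) (hm0 : ∀ x, 0 ≤ m x) (hm1 : ∑ x, m x = 1)
    (n : ℕ) (hn : 1 ≤ n) (F : (Fin n → X) → ℝ) :
    ∑ x, m x * Ex P x n (fun ω => F (fun i => ω (i.1 + 1))) =
      ∑ x, ν x * Ex (dualK P ν) x (n + 1)
        (fun ω => F (fun i => ω (n - i.1)) * (m (ω (n + 1)) / ν (ω (n + 1)))) :=
  duality_formula_general P ν hS m n F
end CLLT
end

section
/- Assume Hypothesis 1. The following three statements are equivalent: (1) there exists (θ,a) ∈ ℝ² such that for every orbit x₀,…,x_n (i.e., every finite sequence with P(x₀,x₁)⋯P(x_{n−1},x_n)P(x_n,x₀) > 0), f(x₀)+⋯+f(x_n) − (n+1)θ ∈ aℤ; (2) there exist t ∈ ℝ∖{0}, a not identically zero function h : 𝕏 → ℂ, and θ ∈ ℝ such that for all (x,x') ∈ 𝕏², h(x')e^{itf(x')}P(x,x') = h(x)e^{itθ}P(x,x'); (3) there exists t ∈ ℝ∖{0} such that r_t = 1. -/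
open Finset Filter Real Topology MeasureTheory

namespace CLLT

variable {X : Type*}

/-!
Along an edge `x → x'` (that is, `P x x' > 0`) condition (2) reads
`h x' = h x · e^{it(θ - f x')}`: the phase `e^{it(θ - f x')}` is a coboundary on the transition
graph. Primitivity makes this graph strongly connected, and on such a graph a cocycle with
values in an abelian group is a coboundary iff its product around every closed walk is `1`
(the potential is the product along walks from a base point). Around an orbit `x₀, …, xₙ` the
product is `e^{it((n+1)θ - Σ f(xᵢ))}`, which is `1` exactly when (1) holds with `a = 2π/t`.

For (2) ⇔ (3): `P_t` has sup-operator norm at most `1`, so the eigenvalue `e^{itθ}` of (2) gives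
`r_t = 1`. Conversely, if `P_t v = μ v` with `|μ| = 1`, then at a point where `|v|` is maximal the
row equation is an equality case of the triangle inequality for a convex combination; strict
convexity of `ℂ` forces `e^{itf(x')} v(x') = μ v(x)` along every edge, so the maximum of `|v|`
propagates through the graph and `v` satisfies (2) with `e^{itθ} = μ`.
-/

open Relation
open scoped Matrix

lemma invariant_of_reflTransGen {r : X → X → Prop} {A : X → Prop}
    (hA : ∀ x x', r x x' → A x → A x') {x y : X} (hxy : ReflTransGen r x y) (hx : A x) : A y := by
  induction hxy with
  | refl => exact hx
  | tail _ hyz ih => exact hA _ _ hyz ih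

section Primitive

variable [Fintype X] [DecidableEq X] {P : X → X → ℝ}

lemma kpow_nonneg (hP0 : ∀ x x', 0 ≤ P x x') : ∀ k x x', 0 ≤ kpow P k x x'
  | 0, x, x' => by unfold kpow; positivity
  | k + 1, x, _ => Finset.sum_nonneg fun y _ => mul_nonneg (hP0 x y) (kpow_nonneg hP0 k y _)

lemma exists_pos_of_kpow_succ_pos (hP0 : ∀ x x', 0 ≤ P x x') {k : ℕ} {x x' : X}
    (h : 0 < kpow P (k + 1) x x') : ∃ y, 0 < P x y ∧ 0 < kpow P k y x' := by
  obtain ⟨y, -, hy⟩ := Finset.exists_lt_of_sum_lt (s := Finset.univ) (f := 0)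
    (g := fun y => P x y * kpow P k y x') (by simpa [kpow] using h)
  obtain ⟨hxy, hyx'⟩ := mul_ne_zero_iff.mp hy.ne'
  exact ⟨y, (hP0 x y).lt_of_ne' hxy, (kpow_nonneg hP0 k y x').lt_of_ne' hyx'⟩

lemma reflTransGen_of_kpow_pos (hP0 : ∀ x x', 0 ≤ P x x') :
    ∀ {k : ℕ} {x x' : X}, 0 < kpow P k x x' → ReflTransGen (fun a b => 0 < P a b) x x'
  | 0, x, x', h => by
    obtain rfl : x = x' := by by_contra hne; simp [kpow, hne] at h
    exact .refl
  | _ + 1, _, _, h =>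
    have ⟨_, hxy, hy⟩ := exists_pos_of_kpow_succ_pos hP0 h
    .head hxy (reflTransGen_of_kpow_pos hP0 hy)

lemma Primitive.transGen (hP0 : ∀ x x', 0 ≤ P x x') (h1 : Primitive P) (x x' : X) :
    TransGen (fun a b => 0 < P a b) x x' := by
  obtain ⟨k₀, hk₀, hpos⟩ := h1
  obtain ⟨k, rfl⟩ := Nat.exists_eq_add_of_le' hk₀
  obtain ⟨y, hxy, hy⟩ := exists_pos_of_kpow_succ_pos hP0 (hpos x x')
  exact .head' hxy (reflTransGen_of_kpow_pos hP0 hy)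

end Primitive

section Potential

variable {G : Type*} [CommGroup G] {r : X → X → Prop} {c : X → X → G}

def liftStep (r : X → X → Prop) (c : X → X → G) (p q : X × G) : Prop :=
  r p.1 q.1 ∧ q.2 = p.2 * c p.1 q.1

lemma exists_liftStep_of_reflTransGen {y z : X} (h : ReflTransGen r y z) :
    ∃ δ : G, ∀ γ, ReflTransGen (liftStep r c) (y, γ) (z, γ * δ) := by
  induction h with
  | refl => exact ⟨1, fun γ => by simpa using ReflTransGen.refl⟩
  | @tail z z' _ hzz' ih =>
    obtain ⟨δ, hδ⟩ := ih
    exact ⟨δ * c z z', fun γ => (hδ γ).tail ⟨hzz', by simp [mul_assoc]⟩⟩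

lemma exists_path_of_liftStep {x₀ y : X} {γ : G}
    (h : ReflTransGen (liftStep r c) (x₀, 1) (y, γ)) :
    ∃ (n : ℕ) (g : Fin (n + 1) → X), g 0 = x₀ ∧ g (Fin.last n) = y ∧
      (∀ i : Fin n, r (g i.castSucc) (g i.succ)) ∧
      ∏ i : Fin n, c (g i.castSucc) (g i.succ) = γ := by
  generalize hp : (y, γ) = p at h
  induction h generalizing y γ with
  | refl =>
    cases hp
    exact ⟨0, fun _ => x₀, rfl, rfl, finZeroElim, rfl⟩
  | @tail q p _ hqp ih =>
    cases hp
    obtain ⟨n, g, hg0, hgn, hgr, hgc⟩ := ih rfl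
    refine ⟨n + 1, Fin.snoc g y, ?_, Fin.snoc_last _ _, fun i => ?_, ?_⟩
    · rw [← Fin.castSucc_zero, Fin.snoc_castSucc, hg0]
    · induction i using Fin.lastCases with
      | last => rw [Fin.succ_last, Fin.snoc_last, Fin.snoc_castSucc, hgn]; exact hqp.1
      | cast j => rw [Fin.succ_castSucc, Fin.snoc_castSucc, Fin.snoc_castSucc]; exact hgr j
    · simp only [Fin.prod_univ_castSucc, Fin.succ_castSucc, Fin.succ_last, Fin.snoc_castSucc,
        Fin.snoc_last, hgc, hgn]
      exact hqp.2.symm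

lemma prod_cycle_of_path {n : ℕ} {g : Fin (n + 1) → X}
    (hgr : ∀ i : Fin n, r (g i.castSucc) (g i.succ)) (hback : r (g (Fin.last n)) (g 0)) :
    (∀ i, r (g i) (g (i + 1))) ∧ ∏ i, c (g i) (g (i + 1)) =
      (∏ i : Fin n, c (g i.castSucc) (g i.succ)) * c (g (Fin.last n)) (g 0) := by
  refine ⟨fun i => ?_, ?_⟩
  · induction i using Fin.lastCases with
    | last => rwa [Fin.last_add_one]
    | cast j => rw [Fin.coeSucc_eq_succ]; exact hgr j
  · simp only [Fin.prod_univ_castSucc, Fin.coeSucc_eq_succ, Fin.last_add_one]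

theorem exists_potential_of_prod_cycle_eq_one [Nonempty X] (hr : ∀ x y, TransGen r x y)
    (hc : ∀ (n : ℕ) (g : Fin (n + 1) → X), (∀ i, r (g i) (g (i + 1))) →
      ∏ i, c (g i) (g (i + 1)) = 1) :
    ∃ h : X → G, ∀ x x', r x x' → h x' = h x * c x x' := by
  obtain ⟨x₀⟩ := ‹Nonempty X›
  let Reach (p : X × G) : Prop := ReflTransGen (liftStep r c) (x₀, 1) p
  have closing {y : X} {γ : G} (hy : Reach (y, γ)) (hyx₀ : r y x₀) : γ * c y x₀ = 1 := by
    obtain ⟨n, g, hg0, hgn, hgr, rfl⟩ := exists_path_of_liftStep hy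
    subst hg0 hgn
    obtain ⟨hcyc, hprod⟩ := prod_cycle_of_path (c := c) hgr hyx₀
    rw [← hprod, hc n g hcyc]
  have reach_unique {y : X} {γ₁ γ₂ : G} (h₁ : Reach (y, γ₁)) (h₂ : Reach (y, γ₂)) : γ₁ = γ₂ := by
    obtain ⟨z, hyz, hzx₀⟩ := TransGen.tail'_iff.mp (hr y x₀)
    obtain ⟨δ, hδ⟩ := exists_liftStep_of_reflTransGen (c := c) hyz
    have e₁ := closing (h₁.trans (hδ γ₁)) hzx₀
    have e₂ := closing (h₂.trans (hδ γ₂)) hzx₀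
    exact mul_right_cancel (mul_right_cancel (e₁.trans e₂.symm))
  have reach (y : X) : ∃ γ, Reach (y, γ) := by
    obtain ⟨δ, hδ⟩ := exists_liftStep_of_reflTransGen (c := c) (hr x₀ y).to_reflTransGen
    exact ⟨1 * δ, hδ 1⟩
  choose h hh using reach
  exact ⟨h, fun x x' hxx' =>
    reach_unique (hh x') ((hh x).tail (c := (x', h x * c x x')) ⟨hxx', rfl⟩)⟩

theorem prod_cycle_eq_one_of_potential {h : X → G}
    (hh : ∀ x x', r x x' → h x' = h x * c x x') {n : ℕ} {g : Fin (n + 1) → X}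
    (hg : ∀ i, r (g i) (g (i + 1))) :
    ∏ i, c (g i) (g (i + 1)) = 1 := by
  have hc : ∀ i, c (g i) (g (i + 1)) = h (g (i + 1)) / h (g i) := fun i => by
    rw [hh _ _ (hg i), mul_div_cancel_left]
  rw [Finset.prod_congr rfl fun i _ => hc i, Finset.prod_div_distrib, div_eq_one]
  exact Fintype.prod_equiv (Equiv.addRight 1) _ _ fun _ => rfl

end Potential

lemma prod_pos_iff_forall_pos {n : ℕ} {P : X → X → ℝ} (hP0 : ∀ x x', 0 ≤ P x x')
    (g : Fin (n + 1) → X) :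
    0 < ∏ i, P (g i) (g (i + 1)) ↔ ∀ i, 0 < P (g i) (g (i + 1)) := by
  refine ⟨fun h i => (hP0 _ _).lt_of_ne' ?_, fun h => Finset.prod_pos fun i _ => h i⟩
  exact Finset.prod_ne_zero_iff.mp h.ne' i (Finset.mem_univ i)

open Complex in
lemma exp_I_mul_eq_one_iff {t : ℝ} (ht : t ≠ 0) (y : ℝ) :
    cexp (I * t * y) = 1 ↔ ∃ m : ℤ, y = 2 * π / t * m := by
  rw [Complex.exp_eq_one_iff]
  refine exists_congr fun m => ?_
  have lhs : I * t * y = ((t * y : ℝ) : ℂ) * I := by push_cast; ring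
  have rhs : (m : ℂ) * (2 * π * I) = ((2 * π * m : ℝ) : ℂ) * I := by push_cast; ring
  rw [lhs, rhs, mul_left_inj' I_ne_zero, ofReal_inj, div_mul_eq_mul_div, eq_div_iff ht,
    mul_comm y]

section Lattice

variable {P : X → X → ℝ} {f : X → ℝ}

/-- Condition (1) for fixed `θ` and `a`; an orbit is a sequence indexed by `Fin (n + 1)`, where
`i + 1` wraps around. -/
def LatticeCond (P : X → X → ℝ) (f : X → ℝ) (θ a : ℝ) : Prop :=
  ∀ (n : ℕ) (g : Fin (n + 1) → X), 0 < ∏ i : Fin (n + 1), P (g i) (g (i + 1)) →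
    ∃ m : ℤ, (∑ i, f (g i)) - (n + 1 : ℝ) * θ = a * (m : ℝ)

/-- Condition (2) for fixed `t`, `h` and `θ`. -/
def IsPhaseEigenfunction (P : X → X → ℝ) (f : X → ℝ) (t : ℝ) (h : X → ℂ) (θ : ℝ) : Prop :=
  ∀ x x' : X, h x' * Complex.exp (Complex.I * (t : ℂ) * (f x' : ℂ)) * (P x x' : ℂ) =
    h x * Complex.exp (Complex.I * (t : ℂ) * (θ : ℂ)) * (P x x' : ℂ)

/-- The factor `e^{it(θ - f x')}` by which an eigenfunction of `P_t` for the eigenvalue `e^{itθ}`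
changes along an edge into `x'`. -/
noncomputable def phase (f : X → ℝ) (t θ : ℝ) (x' : X) : ℂˣ :=
  Units.mk0 (Complex.exp (Complex.I * t * (θ - f x' : ℝ))) (Complex.exp_ne_zero _)

lemma prod_phase_eq_one_iff {t θ : ℝ} (ht : t ≠ 0) {n : ℕ} (g : Fin (n + 1) → X) :
    ∏ i, phase f t θ (g (i + 1)) = 1 ↔
      ∃ m : ℤ, (∑ i, f (g i)) - (n + 1 : ℝ) * θ = 2 * π / t * m := by
  have hshift : ∏ i, phase f t θ (g (i + 1)) = ∏ i, phase f t θ (g i) :=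
    Fintype.prod_equiv (Equiv.addRight 1) _ _ fun _ => rfl
  have hval : ((∏ i, phase f t θ (g i) : ℂˣ) : ℂ) =
      Complex.exp (Complex.I * t * ((n + 1) * θ - ∑ i, f (g i) : ℝ)) := by
    simp only [Units.coe_prod, phase, Units.val_mk0, ← Complex.exp_sum, ← Finset.mul_sum]
    push_cast
    simp [Finset.sum_sub_distrib]
  rw [hshift, ← Units.val_eq_one, hval, exp_I_mul_eq_one_iff ht]
  constructor <;> rintro ⟨m, hm⟩ <;> exact ⟨-m, by push_cast; linarith⟩

lemma latticeCond_iff_prod_phase (hP0 : ∀ x x', 0 ≤ P x x') {t θ : ℝ} (ht : t ≠ 0) :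
    LatticeCond P f θ (2 * π / t) ↔ ∀ (n : ℕ) (g : Fin (n + 1) → X),
      (∀ i, 0 < P (g i) (g (i + 1))) → ∏ i, phase f t θ (g (i + 1)) = 1 := by
  simp only [LatticeCond, prod_pos_iff_forall_pos hP0, prod_phase_eq_one_iff ht]

lemma isPhaseEigenfunction_iff (hP0 : ∀ x x', 0 ≤ P x x') {t θ : ℝ} {h : X → ℂˣ} :
    IsPhaseEigenfunction P f t (fun x => h x) θ ↔
      ∀ x x', 0 < P x x' → h x' = h x * phase f t θ x' := by
  refine forall₂_congr fun x x' => ?_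
  rcases (hP0 x x').eq_or_lt with hP | hP
  · simp [← hP]
  have hphase : ((phase f t θ x' : ℂˣ) : ℂ) =
      Complex.exp (Complex.I * t * θ) / Complex.exp (Complex.I * t * f x') := by
    rw [phase, Units.val_mk0, ← Complex.exp_sub]
    push_cast
    ring_nf
  simp only [hP, true_implies, Units.ext_iff, Units.val_mul, hphase, ← mul_div_assoc,
    eq_div_iff (Complex.exp_ne_zero _)]
  exact mul_left_inj' (by exact_mod_cast hP.ne')

theorem latticeCond_of_isPhaseEigenfunction (hP0 : ∀ x x', 0 ≤ P x x')
    (hconn : ∀ x y, ReflTransGen (fun a b => 0 < P a b) x y) {t θ : ℝ} (ht : t ≠ 0) {h : X → ℂ}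
    (hh : h ≠ 0) (he : IsPhaseEigenfunction P f t h θ) : LatticeCond P f θ (2 * π / t) := by
  have hne : ∀ x, h x ≠ 0 := by
    obtain ⟨x₀, hx₀⟩ := Function.ne_iff.mp hh
    refine fun x => invariant_of_reflTransGen (A := fun x => h x ≠ 0)
      (fun y y' hP hy hy' => ?_) (hconn x₀ x) hx₀
    have := he y y'
    rw [hy', zero_mul, zero_mul] at this
    exact mul_ne_zero (mul_ne_zero hy (Complex.exp_ne_zero _)) (mod_cast hP.ne') this.symm
  obtain ⟨H, rfl⟩ : ∃ H : X → ℂˣ, (fun x => (H x : ℂ)) = h :=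
    ⟨fun x => Units.mk0 (h x) (hne x), rfl⟩
  rw [latticeCond_iff_prod_phase hP0 ht]
  exact fun n g hg => prod_cycle_eq_one_of_potential ((isPhaseEigenfunction_iff hP0).mp he) hg

theorem exists_isPhaseEigenfunction_of_latticeCond [Nonempty X] (hP0 : ∀ x x', 0 ≤ P x x')
    (hconn : ∀ x y, TransGen (fun a b => 0 < P a b) x y) {θ a : ℝ} (hl : LatticeCond P f θ a) :
    ∃ t : ℝ, t ≠ 0 ∧ ∃ h : X → ℂ, h ≠ 0 ∧ ∃ θ : ℝ, IsPhaseEigenfunction P f t h θ := by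
  obtain ⟨a, ha, hl⟩ : ∃ a ≠ 0, LatticeCond P f θ a := by
    by_cases ha : a = 0
    · refine ⟨1, one_ne_zero, fun n g hg => ⟨0, ?_⟩⟩
      simpa [ha] using (hl n g hg).choose_spec
    · exact ⟨a, ha, hl⟩
  set t := 2 * π / a
  have ht : t ≠ 0 := div_ne_zero (by positivity) ha
  rw [← div_div_cancel₀ (b := a) (by positivity : 2 * π ≠ 0),
    latticeCond_iff_prod_phase hP0 ht] at hl
  obtain ⟨h, hh⟩ :=
    exists_potential_of_prod_cycle_eq_one (c := fun _ x' => phase f t θ x') hconn hl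
  exact ⟨t, ht, fun x => h x, fun h0 => (h (Classical.arbitrary X)).ne_zero (congrFun h0 _), θ,
    (isPhaseEigenfunction_iff hP0).mpr hh⟩

end Lattice

lemma eq_sum_smul_of_le_norm_sum {ι E : Type*} [Fintype ι] [NormedAddCommGroup E]
    [NormedSpace ℝ E] [StrictConvexSpace ℝ E] {w : ι → ℝ} {z : ι → E} {r : ℝ} (h0 : ∀ i, 0 ≤ w i)
    (h1 : ∑ i, w i = 1) (hz : ∀ i, ‖z i‖ ≤ r) (hr : r ≤ ‖∑ i, w i • z i‖) {i : ι}
    (hi : w i ≠ 0) : z i = ∑ j, w j • z j := by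
  have hsame : ∀ j, w j ≠ 0 → z j = z i := fun j hj => by
    by_contra hne
    exact (norm_sum_lt_of_strictConvexSpace (fun k _ => h0 k) h1 (Finset.mem_univ j)
      (Finset.mem_univ i) hne hj hi fun k _ => hz k).not_ge hr
  calc z i = ∑ j, w j • z i := by rw [← Finset.sum_smul, h1, one_smul]
    _ = ∑ j, w j • z j := Finset.sum_congr rfl fun j _ => by
      rcases eq_or_ne (w j) 0 with hj | hj
      · simp [hj]
      · rw [hsame j hj]

lemma Matrix.mem_spectrum_iff_exists_mulVec_eq_smul {K n : Type*} [Field K] [Fintype n]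
    [DecidableEq n] (A : Matrix n n K) (μ : K) :
    μ ∈ spectrum K A ↔ ∃ v ≠ 0, A *ᵥ v = μ • v := by
  rw [← Matrix.spectrum_toLin', ← Module.End.hasEigenvalue_iff_mem_spectrum,
    Module.End.hasEigenvalue_iff, Submodule.ne_bot_iff]
  simp [and_comm]

lemma norm_exp_I_mul_mul (t s : ℝ) : ‖Complex.exp (Complex.I * t * s)‖ = 1 := by
  rw [Complex.norm_exp]
  simp

section Spectrum

attribute [local instance] Matrix.linftyOpNormedAddCommGroup Matrix.linftyOpNormedRing
  Matrix.linftyOpNormedAlgebra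

variable [Fintype X] {P : X → X → ℝ} {f : X → ℝ} {t : ℝ}

lemma Pmat_mulVec_apply (v : X → ℂ) (x : X) :
    (Pmat P f t *ᵥ v) x = ∑ x', P x x' • (v x' * Complex.exp (Complex.I * t * f x')) := by
  simp only [Matrix.mulVec, dotProduct, Pmat, Matrix.of_apply, Complex.real_smul]
  exact Finset.sum_congr rfl fun _ _ => by ring

lemma nnnorm_Pmat_le_one (hP0 : ∀ x x', 0 ≤ P x x') (hP1 : ∀ x, ∑ x', P x x' = 1) :
    ‖Pmat P f t‖₊ ≤ 1 := by
  rw [Matrix.linfty_opNNNorm_def]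
  refine Finset.sup_le fun x _ => ?_
  rw [← NNReal.coe_le_coe]
  push_cast
  simp [Pmat, norm_exp_I_mul_mul, abs_of_nonneg (hP0 _ _), hP1]

lemma spectralRadius_Pmat_le_one [DecidableEq X] [Nonempty X] (hP0 : ∀ x x', 0 ≤ P x x')
    (hP1 : ∀ x, ∑ x', P x x' = 1) : spectralRadius ℂ (Pmat P f t) ≤ 1 :=
  (spectrum.spectralRadius_le_nnnorm _).trans (by exact_mod_cast nnnorm_Pmat_le_one hP0 hP1)

theorem spectralRadius_Pmat_eq_one_of_isPhaseEigenfunction [DecidableEq X] [Nonempty X]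
    (hP0 : ∀ x x', 0 ≤ P x x') (hP1 : ∀ x, ∑ x', P x x' = 1) {h : X → ℂ} (hh : h ≠ 0) {θ : ℝ}
    (he : IsPhaseEigenfunction P f t h θ) : spectralRadius ℂ (Pmat P f t) = 1 := by
  set μ := Complex.exp (Complex.I * t * θ)
  have hev : Pmat P f t *ᵥ h = μ • h := funext fun x => by
    simp only [Pmat_mulVec_apply, Complex.real_smul, Pi.smul_apply, smul_eq_mul]
    calc ∑ x', (P x x' : ℂ) * (h x' * Complex.exp (Complex.I * t * f x'))
        = ∑ x', μ * h x * P x x' := Finset.sum_congr rfl fun x' _ => by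
          rw [mul_comm, he x x']; ring
      _ = μ * h x := by
          rw [← Finset.mul_sum, ← Complex.ofReal_sum, hP1, Complex.ofReal_one, mul_one]
  have hμ : μ ∈ spectrum ℂ (Pmat P f t) :=
    (Matrix.mem_spectrum_iff_exists_mulVec_eq_smul _ _).mpr ⟨h, hh, hev⟩
  refine le_antisymm (spectralRadius_Pmat_le_one hP0 hP1) ?_
  calc (1 : ENNReal) = ‖μ‖₊ := by simp [← NNReal.coe_inj, μ, norm_exp_I_mul_mul]
    _ ≤ spectralRadius ℂ (Pmat P f t) := le_iSup₂ (α := ENNReal) μ hμ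

lemma Pmat_eigenvector_aligned_of_isMax (hP0 : ∀ x x', 0 ≤ P x x')
    (hP1 : ∀ x, ∑ x', P x x' = 1) {μ : ℂ} (hμ : ‖μ‖ = 1) {v : X → ℂ}
    (hev : Pmat P f t *ᵥ v = μ • v) {x : X} (hx : ∀ y, ‖v y‖ ≤ ‖v x‖) {x' : X}
    (hxx' : 0 < P x x') : v x' * Complex.exp (Complex.I * t * f x') = μ * v x := by
  have hrow : μ * v x = ∑ y, P x y • (v y * Complex.exp (Complex.I * t * f y)) := by
    rw [← Pmat_mulVec_apply, hev, Pi.smul_apply, smul_eq_mul]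
  rw [hrow]
  refine eq_sum_smul_of_le_norm_sum (z := fun y => v y * Complex.exp (Complex.I * t * f y))
    (r := ‖v x‖) (hP0 x) (hP1 x) (fun y => ?_) ?_ hxx'.ne'
  · rw [norm_mul, norm_exp_I_mul_mul, mul_one]
    exact hx y
  · rw [← hrow, norm_mul, hμ, one_mul]

/-- Maximality of `|v|` propagates along edges, so every point is a maximum point. -/
lemma Pmat_eigenvector_aligned [Nonempty X] (hP0 : ∀ x x', 0 ≤ P x x')
    (hP1 : ∀ x, ∑ x', P x x' = 1) (hconn : ∀ x y, ReflTransGen (fun a b => 0 < P a b) x y)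
    {μ : ℂ} (hμ : ‖μ‖ = 1) {v : X → ℂ} (hev : Pmat P f t *ᵥ v = μ • v) {x x' : X}
    (hxx' : 0 < P x x') : v x' * Complex.exp (Complex.I * t * f x') = μ * v x := by
  obtain ⟨x₀, -, hx₀⟩ :=
    Finset.exists_max_image Finset.univ (fun y => ‖v y‖) Finset.univ_nonempty
  have hmax : ∀ x y, ‖v y‖ ≤ ‖v x‖ := fun x =>
    invariant_of_reflTransGen (A := fun x => ∀ y, ‖v y‖ ≤ ‖v x‖) (fun x x' hxx' hx y => ?_)
      (hconn x₀ x) (fun y => hx₀ y (Finset.mem_univ y))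
  · exact Pmat_eigenvector_aligned_of_isMax hP0 hP1 hμ hev (hmax x) hxx'
  · have := congrArg norm (Pmat_eigenvector_aligned_of_isMax hP0 hP1 hμ hev hx hxx')
    rw [norm_mul, norm_mul, norm_exp_I_mul_mul, hμ, mul_one, one_mul] at this
    exact this ▸ hx y

theorem exists_isPhaseEigenfunction_of_spectralRadius_eq_one [DecidableEq X] [Nonempty X]
    (hP0 : ∀ x x', 0 ≤ P x x') (hP1 : ∀ x, ∑ x', P x x' = 1)
    (hconn : ∀ x y, ReflTransGen (fun a b => 0 < P a b) x y) (ht : t ≠ 0)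
    (hr : spectralRadius ℂ (Pmat P f t) = 1) :
    ∃ h : X → ℂ, h ≠ 0 ∧ ∃ θ : ℝ, IsPhaseEigenfunction P f t h θ := by
  obtain ⟨μ, hμ, hμ1⟩ := spectrum.exists_nnnorm_eq_spectralRadius (Pmat P f t)
  have hμ1 : ‖μ‖ = 1 := by
    rw [hr, ENNReal.coe_eq_one] at hμ1
    rw [← coe_nnnorm, hμ1, NNReal.coe_one]
  obtain ⟨v, hv, hev⟩ := (Matrix.mem_spectrum_iff_exists_mulVec_eq_smul _ _).mp hμ
  have hθ : Complex.exp (Complex.I * t * (μ.arg / t : ℝ)) = μ := by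
    rw [show Complex.I * t * ((μ.arg / t : ℝ) : ℂ) = μ.arg * Complex.I by
      push_cast; field_simp [Complex.ofReal_ne_zero.mpr ht]]
    simpa [hμ1] using Complex.norm_mul_exp_arg_mul_I μ
  refine ⟨v, hv, μ.arg / t, fun x x' => ?_⟩
  rcases (hP0 x x').eq_or_lt with hP | hP
  · simp [← hP]
  · rw [Pmat_eigenvector_aligned hP0 hP1 hconn hμ1 hev hP, hθ]
    ring

end Spectrum

/-- Lemma 4.1: characterization of the lattice case through the
perturbed operator. -/
theorem lattice_characterization [Fintype X] [DecidableEq X] [Nonempty X]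
    (P : X → X → ℝ) (f : X → ℝ)
    (hP0 : ∀ x x', 0 ≤ P x x') (hP1 : ∀ x, ∑ x', P x x' = 1)
    (h1 : Primitive P) :
    ((∃ θ a : ℝ, ∀ (n : ℕ) (g : Fin (n + 1) → X),
        0 < ∏ i : Fin (n + 1), P (g i) (g (i + 1)) →
          ∃ m : ℤ, (∑ i, f (g i)) - (n + 1 : ℝ) * θ = a * (m : ℝ)) ↔
      (∃ t : ℝ, t ≠ 0 ∧ ∃ h : X → ℂ, h ≠ 0 ∧ ∃ θ : ℝ, ∀ x x' : X,
        h x' * Complex.exp (Complex.I * (t : ℂ) * (f x' : ℂ)) * (P x x' : ℂ) =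
          h x * Complex.exp (Complex.I * (t : ℂ) * (θ : ℂ)) * (P x x' : ℂ))) ∧
    ((∃ t : ℝ, t ≠ 0 ∧ ∃ h : X → ℂ, h ≠ 0 ∧ ∃ θ : ℝ, ∀ x x' : X,
        h x' * Complex.exp (Complex.I * (t : ℂ) * (f x' : ℂ)) * (P x x' : ℂ) =
          h x * Complex.exp (Complex.I * (t : ℂ) * (θ : ℂ)) * (P x x' : ℂ)) ↔
      (∃ t : ℝ, t ≠ 0 ∧ spectralRadius ℂ (Pmat P f t) = 1)) := by
  have hconn := h1.transGen hP0
  have hconn_refl x y := (hconn x y).to_reflTransGen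
  refine ⟨⟨fun ⟨θ, a, hl⟩ => exists_isPhaseEigenfunction_of_latticeCond hP0 hconn hl, ?_⟩, ?_, ?_⟩
  · rintro ⟨t, ht, h, hh, θ, he⟩
    exact ⟨θ, 2 * π / t, latticeCond_of_isPhaseEigenfunction hP0 hconn_refl ht hh he⟩
  · rintro ⟨t, ht, h, hh, θ, he⟩
    exact ⟨t, ht, spectralRadius_Pmat_eq_one_of_isPhaseEigenfunction hP0 hP1 hh he⟩
  · rintro ⟨t, ht, hr⟩
    exact ⟨t, ht, exists_isPhaseEigenfunction_of_spectralRadius_eq_one hP0 hP1 hconn_refl ht hr⟩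

end CLLT
end

section
/- For every ε ∈ (0,1/4), every h ∈ 𝓗_ε and every u ∈ ℝ, (ẖ_ε * κ_{ε²})(u) − ∫_{|v|≥ε} ẖ_ε(u−v)·κ_{ε²}(v) dv ≤ h(u) ≤ (1+4ε)·(h̄_ε * κ_{ε²})(u). -/
/-!
Writing `κ u = sinc (u / 2) ^ 2 / (2π)`, the identity `∫ κ = 1` is Fourier inversion at `0` for the
triangle `max (1 - |x|) 0`, whose Fourier transform is `sinc (π ξ) ^ 2`. The bound
`κ u ≤ 2 / (π u²)` shows that `κ_{ε²}` puts mass at most `4ε/π` on `|v| ≥ ε`. For `|v| < ε` one has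
`ẖ_ε (u - v) ≤ h u ≤ h̄_ε (u - v)`; integrating against `κ_{ε²}` over `|v| < ε` gives the lower
bound at once, and the upper bound `h u (1 - 4ε/π) ≤ (h̄_ε * κ_{ε²}) u`, which suffices because
`(1 + 4ε) (1 - 4ε/π) ≥ 1` as soon as `1 + 4ε ≤ π`.
-/

open Finset Filter Real Topology MeasureTheory

namespace CLLT

variable {X : Type*}

open scoped FourierTransform

def triangle (x : ℝ) : ℝ := max (1 - |x|) 0

@[fun_prop]
lemma continuous_triangle : Continuous triangle := by unfold triangle; fun_prop

lemma triangle_eq_zero {x : ℝ} (hx : 1 ≤ |x|) : triangle x = 0 := max_eq_right (by linarith)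

lemma integrable_triangle : Integrable triangle :=
  continuous_triangle.integrable_of_hasCompactSupport <|
    HasCompactSupport.intro (isCompact_Icc (a := -1) (b := 1)) fun x hx ↦
      triangle_eq_zero (by rw [Set.mem_Icc, ← abs_le, not_le] at hx; exact hx.le)

lemma integral_one_sub_mul_cexp {c : ℂ} (hc : c ≠ 0) :
    ∫ x in (0 : ℝ)..1, (1 - (x : ℂ)) * Complex.exp (c * x) = (Complex.exp c - 1 - c) / c ^ 2 := by
  have hderiv (x : ℝ) : HasDerivAt (fun y : ℝ ↦ Complex.exp (c * y) * ((1 - y) / c + 1 / c ^ 2))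
      ((1 - (x : ℂ)) * Complex.exp (c * x)) x := by
    have hexp : HasDerivAt (fun y : ℂ ↦ Complex.exp (c * y)) (Complex.exp (c * x) * c) x := by
      simpa using ((hasDerivAt_id (x : ℂ)).const_mul c).cexp
    have hlin : HasDerivAt (fun y : ℂ ↦ (1 - y) / c + 1 / c ^ 2) (-1 / c) x := by
      simpa using (((hasDerivAt_id (x : ℂ)).const_sub 1).div_const c).add_const (1 / c ^ 2)
    refine ((hexp.mul hlin).congr_deriv ?_).comp_ofReal
    field_simp
    ring
  rw [intervalIntegral.integral_eq_sub_of_hasDerivAt (fun x _ ↦ hderiv x)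
    (by apply Continuous.intervalIntegrable; fun_prop)]
  simp only [Complex.ofReal_one, Complex.ofReal_zero, mul_one, mul_zero, Complex.exp_zero]
  field_simp
  ring

lemma integral_triangle_mul_cexp {c : ℂ} (hc : c ≠ 0) :
    ∫ x, (triangle x : ℂ) * Complex.exp (c * x) = (Complex.exp c + Complex.exp (-c) - 2) / c ^ 2 := by
  set F : ℝ → ℂ := fun x ↦ (triangle x : ℂ) * Complex.exp (c * x)
  have hF : Continuous F := by fun_prop
  have hsupp (x : ℝ) (hx : x ∉ Set.Ioc (-1) 1) : F x = 0 := by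
    rw [Set.mem_Ioc, not_and_or, not_lt, not_le] at hx
    have : 1 ≤ |x| := le_abs.2 (hx.symm.imp le_of_lt (by intro h; linarith))
    simp [F, triangle_eq_zero this]
  have hright : ∫ x in (0 : ℝ)..1, F x = ∫ x in (0 : ℝ)..1, (1 - (x : ℂ)) * Complex.exp (c * x) := by
    refine intervalIntegral.integral_congr fun x hx ↦ ?_
    rw [Set.uIcc_of_le zero_le_one] at hx
    simp [F, triangle, abs_of_nonneg hx.1, hx.2]
  have hleft : ∫ x in (-1 : ℝ)..0, F x =
      ∫ x in (0 : ℝ)..1, (1 - (x : ℂ)) * Complex.exp (-c * x) := by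
    rw [← neg_zero, ← intervalIntegral.integral_comp_neg, neg_zero]
    refine intervalIntegral.integral_congr fun x hx ↦ ?_
    rw [Set.uIcc_of_le zero_le_one] at hx
    simp [F, triangle, abs_of_nonneg hx.1, hx.2]
  rw [← setIntegral_eq_integral_of_forall_compl_eq_zero hsupp,
    ← intervalIntegral.integral_of_le (by norm_num),
    ← intervalIntegral.integral_add_adjacent_intervals (b := 0) (hF.intervalIntegrable _ _)
      (hF.intervalIntegrable _ _), hleft, hright,
    integral_one_sub_mul_cexp hc, integral_one_sub_mul_cexp (neg_ne_zero.2 hc)]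
  ring

lemma fourier_triangle {ξ : ℝ} (hξ : ξ ≠ 0) :
    𝓕 (fun x ↦ (triangle x : ℂ)) ξ = ((sinc (π * ξ) ^ 2 : ℝ) : ℂ) := by
  set z : ℂ := (π : ℂ) * ξ with hz
  have hz0 : z ≠ 0 := by simp [hz, hξ, pi_ne_zero]
  have hc : -2 * z * Complex.I ≠ 0 := by simp [hz0, Complex.I_ne_zero]
  have hintegrand (x : ℝ) : Complex.exp (↑(-2 * π * x * ξ) * Complex.I) • (triangle x : ℂ) =
      triangle x * Complex.exp (-2 * z * Complex.I * x) := by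
    rw [smul_eq_mul, mul_comm, hz]
    push_cast
    ring_nf
  have hsq (w : ℂ) : Complex.exp (2 * w) = Complex.exp w ^ 2 := by
    rw [← Complex.exp_nat_mul]; norm_num
  have hinv : Complex.exp (-(z * Complex.I)) * Complex.exp (z * Complex.I) = 1 := by
    rw [← Complex.exp_add]; simp
  simp_rw [Real.fourier_real_eq_integral_exp_smul, hintegrand]
  rw [integral_triangle_mul_cexp hc, sinc_of_ne_zero (mul_ne_zero pi_ne_zero hξ)]
  push_cast
  rw [← hz]
  clear_value z
  -- `e^{-2iz} + e^{2iz} - 2 = (e^{-iz} - e^{iz})² = (2i sin z)²`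
  rw [Complex.sin, show -2 * z * Complex.I = 2 * (-z * Complex.I) by ring,
    show -(2 * (-z * Complex.I)) = 2 * (z * Complex.I) by ring, hsq, hsq]
  field_simp
  ring_nf
  rw [Complex.I_pow_four]
  linear_combination 2 * hinv

lemma sinc_sq_mul_sq_le (x : ℝ) : sinc x ^ 2 * x ^ 2 ≤ 1 := by
  rcases eq_or_ne x 0 with rfl | hx
  · simp
  · rw [sinc_of_ne_zero hx, div_pow, div_mul_cancel₀ _ (pow_ne_zero 2 hx)]
    exact sin_sq_le_one x

lemma sinc_sq_le (x : ℝ) : sinc x ^ 2 ≤ 2 * (1 + x ^ 2)⁻¹ := by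
  rw [le_mul_inv_iff₀ (by positivity)]
  linarith [(sq_le_one_iff_abs_le_one _).2 (abs_sinc_le_one x), sinc_sq_mul_sq_le x]

lemma integrable_sinc_sq : Integrable fun x ↦ sinc x ^ 2 :=
  (integrable_inv_one_add_sq.const_mul 2).mono' (by fun_prop)
    (.of_forall fun x ↦ by simpa using sinc_sq_le x)

lemma integral_sinc_sq : ∫ x, sinc x ^ 2 = π := by
  have hπ : π ≠ 0 := pi_ne_zero
  have hfourier : 𝓕 (fun x ↦ (triangle x : ℂ)) =ᵐ[volume] fun ξ ↦ ((sinc (π * ξ) ^ 2 : ℝ) : ℂ) := by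
    filter_upwards [Measure.ae_ne volume 0] with ξ hξ using fourier_triangle hξ
  have hinv := (integrable_triangle.ofReal).fourierInv_fourier_eq
    ((integrable_sinc_sq.comp_mul_left' hπ).ofReal.congr hfourier.symm)
    (Complex.continuous_ofReal.comp continuous_triangle).continuousAt (v := 0)
  simp only [Real.fourierInv_eq, inner_zero_right, AddChar.map_zero_eq_one, one_smul] at hinv
  rw [integral_congr_ae hfourier, integral_complex_ofReal, Complex.ofReal_inj,
    Measure.integral_comp_mul_left (fun x ↦ sinc x ^ 2), abs_of_pos (inv_pos.2 pi_pos),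
    smul_eq_mul] at hinv
  simpa [triangle, inv_mul_eq_iff_eq_mul₀ hπ] using hinv

lemma kapp_eq_sinc_sq (u : ℝ) : kapp u = sinc (u / 2) ^ 2 / (2 * π) := by
  unfold kapp
  split_ifs with hu
  · simp [hu]
  · rw [sinc_of_ne_zero (div_ne_zero hu two_ne_zero)]

lemma kapp_nonneg (u : ℝ) : 0 ≤ kapp u := by
  rw [kapp_eq_sinc_sq]; positivity

lemma kapp_le (u : ℝ) : kapp u ≤ 1 / (2 * π) := by
  rw [kapp_eq_sinc_sq]
  gcongr
  exact (sq_le_one_iff_abs_le_one _).2 (abs_sinc_le_one _)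

lemma kapp_le_inv_sq {u : ℝ} (hu : u ≠ 0) : kapp u ≤ 2 / (π * u ^ 2) := by
  have h := sinc_sq_mul_sq_le (u / 2)
  rw [kapp_eq_sinc_sq, div_le_div_iff₀ (by positivity) (by positivity)]
  nlinarith [pi_pos]

lemma kapp_neg (u : ℝ) : kapp (-u) = kapp u := by
  simp only [kapp_eq_sinc_sq, neg_div, sinc_neg]

lemma continuous_kapp : Continuous kapp := by
  simp_rw [funext kapp_eq_sinc_sq]
  fun_prop (disch := exact continuous_sinc)

lemma integrable_kapp : Integrable kapp := by
  simp_rw [funext kapp_eq_sinc_sq]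
  exact ((integrable_sinc_sq.comp_div two_ne_zero).div_const _)

lemma integral_kapp : ∫ u, kapp u = 1 := by
  simp_rw [kapp_eq_sinc_sq, integral_div]
  rw [Measure.integral_comp_div (fun x ↦ sinc x ^ 2), integral_sinc_sq, abs_two, smul_eq_mul,
    div_self (by positivity)]

lemma measurableSet_le_abs (T : ℝ) : MeasurableSet {x : ℝ | T ≤ |x|} :=
  measurableSet_le measurable_const measurable_abs

lemma setIntegral_le_abs_add_setIntegral_abs_lt {f : ℝ → ℝ} (hf : Integrable f) (T : ℝ) :
    (∫ x in {x | T ≤ |x|}, f x) + ∫ x in {x | |x| < T}, f x = ∫ x, f x := by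
  rw [← integral_add_compl (measurableSet_le_abs T) hf, Set.compl_ofPred]
  simp only [not_le]

lemma setIntegral_le_abs_of_even {f : ℝ → ℝ} (hf : ∀ x, f (-x) = f x) {T : ℝ} (hT : 0 < T) :
    ∫ x in {x | T ≤ |x|}, f x = 2 * ∫ x in Set.Ioi T, f x := by
  have habs (x : ℝ) : f |x| = f x := by rcases abs_choice x with h | h <;> simp [h, hf]
  calc ∫ x in {x | T ≤ |x|}, f x = ∫ x, (Set.Ici T).indicator f |x| := by
        rw [← integral_indicator (measurableSet_le_abs T)]
        congr 1 with x
        simp [Set.indicator, habs]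
    _ = 2 * ∫ x in Set.Ioi 0, (Set.Ici T).indicator f x := integral_comp_abs
    _ = 2 * ∫ x in Set.Ioi T, f x := by
        rw [integral_indicator measurableSet_Ici, Measure.restrict_restrict measurableSet_Ici,
          Set.inter_eq_left.2 (Set.Ici_subset_Ioi.2 hT), integral_Ici_eq_integral_Ioi]

section ScaledKernel

variable {δ : ℝ}

lemma kappD_nonneg (hδ : 0 ≤ δ) (v : ℝ) : 0 ≤ kappD δ v :=
  div_nonneg (kapp_nonneg _) hδ

lemma kappD_neg (v : ℝ) : kappD δ (-v) = kappD δ v := by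
  simp only [kappD, neg_div, kapp_neg]

lemma continuous_kappD : Continuous (kappD δ) :=
  (continuous_kapp.comp (continuous_id.div_const δ)).div_const δ

lemma integrable_kappD (hδ : δ ≠ 0) : Integrable (kappD δ) :=
  (integrable_kapp.comp_div hδ).div_const δ

lemma integral_kappD (hδ : 0 < δ) : ∫ v, kappD δ v = 1 := by
  simp only [kappD]
  rw [integral_div, Measure.integral_comp_div kapp, abs_of_pos hδ, smul_eq_mul,
    integral_kapp, mul_one, div_self hδ.ne']

lemma norm_kappD_le (hδ : 0 < δ) (v : ℝ) : ‖kappD δ v‖ ≤ 1 / (2 * π) / δ := by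
  rw [Real.norm_of_nonneg (kappD_nonneg hδ.le v), kappD]
  gcongr
  exact kapp_le _

lemma kappD_le_rpow (hδ : 0 < δ) {v : ℝ} (hv : v ≠ 0) : kappD δ v ≤ 2 * δ / π * v ^ (-2 : ℝ) := by
  have h := kapp_le_inv_sq (div_ne_zero hv hδ.ne')
  rw [kappD, div_le_iff₀ hδ, Real.rpow_neg_ofNat, zpow_neg, zpow_ofNat]
  calc kapp (v / δ) ≤ 2 / (π * (v / δ) ^ 2) := h
    _ = 2 * δ / π * (v ^ 2)⁻¹ * δ := by field_simp

lemma integrable_comp_sub_mul_kappD {g : ℝ → ℝ} (hg : Integrable g) (hδ : 0 < δ) (u : ℝ) :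
    Integrable fun v ↦ g (u - v) * kappD δ v :=
  (hg.comp_sub_left u).mul_bdd continuous_kappD.aestronglyMeasurable
    (.of_forall (norm_kappD_le hδ))

lemma setIntegral_le_abs_kappD_le (hδ : 0 < δ) {T : ℝ} (hT : 0 < T) :
    ∫ v in {v | T ≤ |v|}, kappD δ v ≤ 4 * δ / (π * T) := by
  rw [setIntegral_le_abs_of_even kappD_neg hT]
  have hbound : ∫ v in Set.Ioi T, kappD δ v ≤ ∫ v in Set.Ioi T, 2 * δ / π * v ^ (-2 : ℝ) :=
    setIntegral_mono_on (integrable_kappD hδ.ne').integrableOn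
      ((integrableOn_Ioi_rpow_of_lt (by norm_num) hT).const_mul _) measurableSet_Ioi
      fun v hv ↦ kappD_le_rpow hδ (hT.trans hv).ne'
  have hrpow : ∫ v in Set.Ioi T, 2 * δ / π * v ^ (-2 : ℝ) = 2 * δ / (π * T) := by
    rw [integral_const_mul, integral_Ioi_rpow_of_lt (by norm_num) hT]
    norm_num [Real.rpow_neg_one]
    field_simp
  calc 2 * ∫ v in Set.Ioi T, kappD δ v ≤ 2 * (2 * δ / (π * T)) := by linarith
    _ = 4 * δ / (π * T) := by ring

lemma one_sub_le_setIntegral_kappD (hδ : 0 < δ) {T : ℝ} (hT : 0 < T) :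
    1 - 4 * δ / (π * T) ≤ ∫ v in {v | |v| < T}, kappD δ v := by
  have hsplit := setIntegral_le_abs_add_setIntegral_abs_lt (integrable_kappD hδ.ne') T
  rw [integral_kappD hδ] at hsplit
  linarith [setIntegral_le_abs_kappD_le hδ hT]

end ScaledKernel

section Regularisation

variable {h : ℝ → ℝ} {ε u v : ℝ}

lemma mem_Icc_sub_of_abs_le (hv : |v| ≤ ε) : u ∈ Set.Icc (u - v - ε) (u - v + ε) := by
  rw [abs_le] at hv
  constructor <;> linarith

lemma loReg_sub_le (h0 : ∀ x, 0 ≤ h x) (hv : |v| ≤ ε) : loReg h ε (u - v) ≤ h u :=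
  csInf_le ⟨0, by rintro _ ⟨x, -, rfl⟩; exact h0 x⟩ ⟨u, mem_Icc_sub_of_abs_le hv, rfl⟩

lemma le_upReg_sub (hbdd : ∀ K : Set ℝ, IsCompact K → BddAbove (h '' K)) (hv : |v| ≤ ε) :
    h u ≤ upReg h ε (u - v) :=
  le_csSup (hbdd _ isCompact_Icc) ⟨u, mem_Icc_sub_of_abs_le hv, rfl⟩

lemma upReg_nonneg (h0 : ∀ x, 0 ≤ h x) (hbdd : ∀ K : Set ℝ, IsCompact K → BddAbove (h '' K))
    (hε : 0 ≤ ε) (u : ℝ) : 0 ≤ upReg h ε u := by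
  simpa using (h0 u).trans (le_upReg_sub (u := u) (v := 0) hbdd (by simpa using hε))

end Regularisation

section Smoothing

variable {g k : ℝ → ℝ} {u ε c : ℝ}

lemma convR_eq_integral_sub_mul (g k : ℝ → ℝ) (u : ℝ) :
    convR g k u = ∫ v, g (u - v) * k v := by
  rw [convR, ← integral_sub_left_eq_self _ volume u]
  simp only [sub_sub_cancel]

lemma convR_sub_setIntegral_le (hk : Integrable k) (hk0 : ∀ v, 0 ≤ k v) (hk1 : ∫ v, k v ≤ 1)
    (hgk : Integrable fun v ↦ g (u - v) * k v) (hc : 0 ≤ c)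
    (hg : ∀ v, |v| < ε → g (u - v) ≤ c) :
    convR g k u - ∫ v in {v | ε ≤ |v|}, g (u - v) * k v ≤ c := by
  have hsplit := setIntegral_le_abs_add_setIntegral_abs_lt hgk ε
  have hinner : ∫ v in {v | |v| < ε}, g (u - v) * k v ≤ c := calc
    _ ≤ ∫ v in {v | |v| < ε}, c * k v :=
      setIntegral_mono_on hgk.integrableOn (hk.const_mul c).integrableOn
        (measurableSet_lt measurable_abs measurable_const)
        fun v hv ↦ mul_le_mul_of_nonneg_right (hg v hv) (hk0 v)
    _ ≤ ∫ v, c * k v :=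
      setIntegral_le_integral (hk.const_mul c) (.of_forall fun v ↦ mul_nonneg hc (hk0 v))
    _ ≤ c := by
      rw [integral_const_mul]
      exact mul_le_of_le_one_right hc hk1
  rw [convR_eq_integral_sub_mul]
  linarith

lemma mul_setIntegral_le_convR (hk : Integrable k) (hk0 : ∀ v, 0 ≤ k v)
    (hgk : Integrable fun v ↦ g (u - v) * k v) (hg0 : ∀ v, 0 ≤ g v)
    (hg : ∀ v, |v| < ε → c ≤ g (u - v)) :
    c * ∫ v in {v | |v| < ε}, k v ≤ convR g k u := by
  rw [convR_eq_integral_sub_mul, ← integral_const_mul]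
  calc ∫ v in {v | |v| < ε}, c * k v ≤ ∫ v in {v | |v| < ε}, g (u - v) * k v :=
        setIntegral_mono_on (hk.const_mul c).integrableOn hgk.integrableOn
          (measurableSet_lt measurable_abs measurable_const)
          fun v hv ↦ mul_le_mul_of_nonneg_right (hg v hv) (hk0 v)
    _ ≤ ∫ v, g (u - v) * k v :=
        setIntegral_le_integral hgk (.of_forall fun v ↦ mul_nonneg (hg0 _) (hk0 v))

end Smoothing

/-- Lemma 5.2: smoothing inequalities. -/
theorem smoothing_inequalities :
    ∀ ε ∈ Set.Ioo (0 : ℝ) (1 / 4), ∀ h : ℝ → ℝ, MemH ε h → ∀ u : ℝ,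
      convR (loReg h ε) (kappD (ε ^ 2)) u -
          (∫ v in {v : ℝ | ε ≤ |v|}, loReg h ε (u - v) * kappD (ε ^ 2) v) ≤ h u ∧
        h u ≤ (1 + 4 * ε) * convR (upReg h ε) (kappD (ε ^ 2)) u := by
  rintro ε ⟨hε, hε4⟩ h ⟨h0, hbdd, -, -, -, -, hup, hlo⟩ u
  have hδ : 0 < ε ^ 2 := by positivity
  refine ⟨convR_sub_setIntegral_le (integrable_kappD hδ.ne') (kappD_nonneg hδ.le)
    (integral_kappD hδ).le (integrable_comp_sub_mul_kappD hlo hδ u) (h0 u)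
    fun v hv ↦ loReg_sub_le h0 hv.le, ?_⟩
  have hmass : 1 - 4 * ε / π ≤ ∫ v in {v | |v| < ε}, kappD (ε ^ 2) v := by
    have hmass' := one_sub_le_setIntegral_kappD hδ hε
    rwa [show 4 * ε ^ 2 / (π * ε) = 4 * ε / π by field_simp] at hmass'
  have hfactor : 1 ≤ (1 + 4 * ε) * (1 - 4 * ε / π) := by
    have : (1 + 4 * ε) * (4 * ε / π) ≤ 4 * ε := by
      rw [mul_div_assoc', div_le_iff₀ pi_pos]
      nlinarith [pi_gt_three]
    nlinarith
  calc h u ≤ (1 + 4 * ε) * (h u * ∫ v in {v | |v| < ε}, kappD (ε ^ 2) v) := by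
        nlinarith [mul_le_mul_of_nonneg_left hmass (h0 u), h0 u]
    _ ≤ (1 + 4 * ε) * convR (upReg h ε) (kappD (ε ^ 2)) u := by
        gcongr
        exact mul_setIntegral_le_convR (integrable_kappD hδ.ne') (kappD_nonneg hδ.le)
          (integrable_comp_sub_mul_kappD hup hδ u) (upReg_nonneg h0 hbdd hε.le)
          fun v hv ↦ le_upReg_sub hbdd hv.le
end CLLT
end
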